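/- arXiv:2512.04696 — 6 statements merged into one kernel-verified Lean document; each statement's English description precedes it below -/
import Mathlib

section
/- Let L : ℝ × ℝ → ℝ admit a partial derivative ∂₂L in its second argument, let F : ℝ^q → ℝ be differentiable with gradient ∇F, let η > 0, let I ⊆ [m], let y ∈ ℝ^m, and let X ∈ ℝ^{m×n} have rows x₁ᵀ,…,x_mᵀ. Define the one-step gradient update map T(y, X, W₁) = W₁ − η Σ_{i∈I} ∂₂L(y_i, F(W₁ᵀx_i)) · x_i (∇F(W₁ᵀx_i))ᵀ for W₁ ∈ ℝ^{n×q}. Then for every orthogonal matrix U ∈ ℝ^{n×n} and every W₁ ∈ ℝ^{n×q}, it holds that T(y, XU, W₁) = Uᵀ T(y, X, UW₁). -/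
open MeasureTheory Matrix

/-- One-step (stochastic) gradient-descent update of the first-layer weight matrix
`W₁ ∈ ℝ^{n×q}` of a network `f_{W₁}(x) = F(W₁ᵀx)` for the loss `Σ_{i∈I} L(y_i, F(W₁ᵀx_i))`
with learning rate `η`, mini-batch `I`, partial derivative `dL = ∂₂L` and gradient
`gradF = ∇F`:
`T(y, X, W₁) = W₁ − η Σ_{i∈I} ∂₂L(y_i, F(W₁ᵀx_i)) · x_i (∇F(W₁ᵀx_i))ᵀ`,
where `x_i` is the `i`-th row of `X`. -/
noncomputable def sgdStep {m n q : ℕ} (η : ℝ) (I : Finset (Fin m))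
    (dL : ℝ → ℝ → ℝ) (F : (Fin q → ℝ) → ℝ) (gradF : (Fin q → ℝ) → Fin q → ℝ)
    (y : Fin m → ℝ) (X : Fin m → Fin n → ℝ) (W : Matrix (Fin n) (Fin q) ℝ) :
    Matrix (Fin n) (Fin q) ℝ :=
  W - η • ∑ i ∈ I,
    dL (y i) (F (Wᵀ.mulVec (X i))) • Matrix.vecMulVec (X i) (gradF (Wᵀ.mulVec (X i)))

theorem stmt3_general {m n q : ℕ} (η : ℝ) (I : Finset (Fin m))
    (dL : ℝ → ℝ → ℝ)
    (F : (Fin q → ℝ) → ℝ) (gradF : (Fin q → ℝ) → Fin q → ℝ)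
    (y : Fin m → ℝ) (X : Fin m → Fin n → ℝ)
    (U : Matrix (Fin n) (Fin n) ℝ) (hU : Uᵀ * U = 1)
    (W : Matrix (Fin n) (Fin q) ℝ) :
    sgdStep η I dL F gradF y (fun i => Matrix.vecMul (X i) U) W
      = Uᵀ * sgdStep η I dL F gradF y X (U * W) := by
  have hfeature : ∀ x, (U * W)ᵀ *ᵥ x = Wᵀ *ᵥ (x ᵥ* U) := fun x => by
    rw [transpose_mul, ← mulVec_mulVec, mulVec_transpose U]
  have hW : Uᵀ * (U * W) = W := by rw [← Matrix.mul_assoc, hU, Matrix.one_mul]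
  simp only [sgdStep, hfeature, Matrix.mul_sub, Matrix.mul_smul, hW, Matrix.mul_sum,
    mul_vecMulVec, mulVec_transpose]

/-- deterministic equivariance identity, eq. (rot-W1) in the proof of
Proposition 3.1: for every orthogonal `U ∈ ℝ^{n×n}`, `T(y, XU, W₁) = Uᵀ T(y, X, UW₁)`.
The rows of `XU` are `Uᵀx_i`, i.e. `x_i ᵥ* U`. -/
theorem stmt3 {m n q : ℕ} (η : ℝ) (hη : 0 < η) (I : Finset (Fin m))
    (L : ℝ → ℝ → ℝ) (dL : ℝ → ℝ → ℝ)
    (hdL : ∀ a v : ℝ, HasDerivAt (fun b => L a b) (dL a v) v)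
    (F : (Fin q → ℝ) → ℝ) (gradF : (Fin q → ℝ) → Fin q → ℝ)
    (hF : ∀ x : Fin q → ℝ, HasFDerivAt F
      (LinearMap.toContinuousLinearMap
        (∑ j, gradF x j • (LinearMap.proj j : (Fin q → ℝ) →ₗ[ℝ] ℝ))) x)
    (y : Fin m → ℝ) (X : Fin m → Fin n → ℝ)
    (U : Matrix (Fin n) (Fin n) ℝ) (hU : Uᵀ * U = 1) (hU' : U * Uᵀ = 1)
    (W : Matrix (Fin n) (Fin q) ℝ) :
    sgdStep η I dL F gradF y (fun i => Matrix.vecMul (X i) U) W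
      = Uᵀ * sgdStep η I dL F gradF y X (U * W) :=
  stmt3_general η I dL F gradF y X U hU W
end

section
/- Let L : ℝ × ℝ → ℝ admit a partial derivative ∂₂L in its second argument, let F : ℝ^q → ℝ be differentiable with gradient ∇F, let η > 0 and I ⊆ [m] be deterministic, and define T(y, X, W₁) = W₁ − η Σ_{i∈I} ∂₂L(y_i, F(W₁ᵀx_i)) · x_i (∇F(W₁ᵀx_i))ᵀ, where x_i denotes the i-th row of X. Let B ∈ ℝ^{n×q*}, let (y, X) be a random pair such that (y, XU) has the same distribution as (y, X) for every orthogonal U ∈ ℝ^{n×n} with UB = B, and let W₁⁽⁰⁾ be a random n×q matrix, independent of (y, X), satisfying ŨW₁⁽⁰⁾ ≗ W₁⁽⁰⁾ for every orthogonal Ũ ∈ ℝ^{n×n}. Set W₁⁽¹⁾ = T(y, X, W₁⁽⁰⁾). Then UW₁⁽¹⁾ has the same distribution as W₁⁽¹⁾ for every orthogonal U ∈ ℝ^{n×n} with UB = B. -/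
open MeasureTheory ProbabilityTheory Matrix

/-- Measurable space structure on real matrices (the product σ-algebra on entries). -/
noncomputable instance matrixMeasurableSpace {m n : ℕ} :
    MeasurableSpace (Matrix (Fin m) (Fin n) ℝ) :=
  show MeasurableSpace (Fin m → Fin n → ℝ) from inferInstance

lemma matrix_entry_measurable {a b : ℕ} (i : Fin a) (j : Fin b) :
    Measurable (fun M : Matrix (Fin a) (Fin b) ℝ => M i j) :=
  ((measurable_pi_apply j).comp (measurable_pi_apply i) : _)

lemma const_mul_measurable {n q : ℕ} (U : Matrix (Fin n) (Fin n) ℝ) :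
    Measurable (fun M : Matrix (Fin n) (Fin q) ℝ => U * M) := by
  apply measurable_pi_lambda; intro a; apply measurable_pi_lambda; intro b
  simp only [Matrix.mul_apply]
  exact Finset.measurable_sum _ fun j _ =>
    (measurable_const.mul (matrix_entry_measurable j b))

lemma sgd_equivariant {m n q : ℕ} (η : ℝ) (I : Finset (Fin m))
    (dL : ℝ → ℝ → ℝ) (F : (Fin q → ℝ) → ℝ) (gradF : (Fin q → ℝ) → Fin q → ℝ)
    (y : Fin m → ℝ) (X : Fin m → Fin n → ℝ) (W : Matrix (Fin n) (Fin q) ℝ)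
    (U : Matrix (Fin n) (Fin n) ℝ) (hU : Uᵀ * U = 1) :
    U * sgdStep η I dL F gradF y X W
      = sgdStep η I dL F gradF y (fun i => Matrix.vecMul (X i) Uᵀ) (U * W) := by
  have hvec : ∀ i, Matrix.vecMul (X i) Uᵀ = U.mulVec (X i) := fun i =>
    Matrix.vecMul_transpose U (X i)
  have harg : ∀ i, (U * W)ᵀ.mulVec (U.mulVec (X i)) = Wᵀ.mulVec (X i) := by
    intro i
    rw [Matrix.transpose_mul, ← Matrix.mulVec_mulVec,
      Matrix.mulVec_mulVec (X i) Uᵀ U, hU, Matrix.one_mulVec]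
  have hvmv : ∀ (x : Fin n → ℝ) (g : Fin q → ℝ),
      U * Matrix.vecMulVec x g = Matrix.vecMulVec (U.mulVec x) g := by
    intro x g
    ext a b
    simp [Matrix.mul_apply, Matrix.vecMulVec_apply, Matrix.mulVec, dotProduct,
      Finset.sum_mul, mul_assoc]
  simp only [sgdStep, hvec, harg, Matrix.mul_sub, Matrix.mul_smul, Matrix.mul_sum, hvmv]

/-- t = 1 case of the recursive invariance, eq. (rot-W^1) in the proof of
Proposition 3.1: if `(y, XU) ≗ (y, X)` for every orthogonal `U` with `UB = B`, and the
initialization `W₁⁽⁰⁾` is independent of the data and left-orthogonally invariant in law,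
then the first SGD iterate `W₁⁽¹⁾ = T(y, X, W₁⁽⁰⁾)` satisfies `UW₁⁽¹⁾ ≗ W₁⁽¹⁾` for every
orthogonal `U` with `UB = B`. -/
theorem stmt4 {m n q qs : ℕ} (η : ℝ) (hη : 0 < η) (I : Finset (Fin m))
    (L : ℝ → ℝ → ℝ) (dL : ℝ → ℝ → ℝ)
    (hdL : ∀ a v : ℝ, HasDerivAt (fun b => L a b) (dL a v) v)
    (hdLmeas : Measurable fun p : ℝ × ℝ => dL p.1 p.2)
    (F : (Fin q → ℝ) → ℝ) (gradF : (Fin q → ℝ) → Fin q → ℝ)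
    (hF : ∀ x : Fin q → ℝ, HasFDerivAt F
      (LinearMap.toContinuousLinearMap
        (∑ j, gradF x j • (LinearMap.proj j : (Fin q → ℝ) →ₗ[ℝ] ℝ))) x)
    (hgradFmeas : Measurable gradF)
    (B : Matrix (Fin n) (Fin qs) ℝ)
    {Ω : Type*} [MeasurableSpace Ω] (μ : Measure Ω) [IsProbabilityMeasure μ]
    (y : Ω → Fin m → ℝ) (hy : Measurable y)
    (X : Ω → Fin m → Fin n → ℝ) (hX : Measurable X)
    (W0 : Ω → Matrix (Fin n) (Fin q) ℝ) (hW0 : Measurable W0)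
    (hindep : IndepFun (fun ω => (y ω, X ω)) W0 μ)
    (hdata : ∀ U : Matrix (Fin n) (Fin n) ℝ, Uᵀ * U = 1 → U * B = B →
      Measure.map (fun ω => (y ω, fun i => Matrix.vecMul (X ω i) U)) μ
        = Measure.map (fun ω => (y ω, X ω)) μ)
    (hinit : ∀ V : Matrix (Fin n) (Fin n) ℝ, Vᵀ * V = 1 →
      Measure.map (fun ω => V * W0 ω) μ = Measure.map W0 μ) :
    ∀ U : Matrix (Fin n) (Fin n) ℝ, Uᵀ * U = 1 → U * B = B →
      Measure.map (fun ω => U * sgdStep η I dL F gradF (y ω) (X ω) (W0 ω)) μ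
        = Measure.map (fun ω => sgdStep η I dL F gradF (y ω) (X ω) (W0 ω)) μ := by
  intro U hU hUB
  -- continuity/measurability of F
  have hcontF : Continuous F := continuous_iff_continuousAt.2 fun x => (hF x).continuousAt
  -- the global update map on data-space
  set T : ((Fin m → ℝ) × (Fin m → Fin n → ℝ)) × Matrix (Fin n) (Fin q) ℝ →
      Matrix (Fin n) (Fin q) ℝ :=
    fun p => sgdStep η I dL F gradF p.1.1 p.1.2 p.2 with hTdef
  have hWxmeas : ∀ i : Fin m, Measurable
      (fun p : ((Fin m → ℝ) × (Fin m → Fin n → ℝ)) × Matrix (Fin n) (Fin q) ℝ =>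
        p.2ᵀ.mulVec (p.1.2 i)) := by
    intro i
    apply measurable_pi_lambda; intro k
    simp only [Matrix.mulVec, dotProduct, Matrix.transpose_apply]
    apply Finset.measurable_sum; intro j _
    exact ((matrix_entry_measurable j k).comp measurable_snd).mul
      (((measurable_pi_apply j).comp
        ((measurable_pi_apply i).comp (measurable_snd.comp measurable_fst))))
  have hTmeas : Measurable T := by
    apply measurable_pi_lambda; intro a; apply measurable_pi_lambda; intro b
    have : (fun p : ((Fin m → ℝ) × (Fin m → Fin n → ℝ)) × Matrix (Fin n) (Fin q) ℝ =>
        T p a b) = fun p => p.2 a b - η * ∑ i ∈ I,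
          dL (p.1.1 i) (F (p.2ᵀ.mulVec (p.1.2 i))) *
            (p.1.2 i a * gradF (p.2ᵀ.mulVec (p.1.2 i)) b) := by
      funext p
      simp [hTdef, sgdStep, Matrix.sub_apply, Matrix.smul_apply, Matrix.sum_apply,
        Matrix.vecMulVec_apply, smul_eq_mul, mul_assoc]
    rw [this]
    apply Measurable.sub
    · exact (matrix_entry_measurable a b).comp measurable_snd
    · apply Measurable.const_mul
      apply Finset.measurable_sum; intro i _
      apply Measurable.mul
      · exact hdLmeas.comp
          (((measurable_pi_apply i).comp (measurable_fst.comp measurable_fst)).prodMk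
            ((hcontF.measurable).comp (hWxmeas i)))
      · exact (((measurable_pi_apply (X := fun _ => ℝ) a).comp
          ((measurable_pi_apply i).comp (measurable_snd.comp measurable_fst)))).mul
          ((measurable_pi_apply (X := fun _ => ℝ) b).comp (hgradFmeas.comp (hWxmeas i)))
  -- orthogonality facts
  have hUUT : U * Uᵀ = 1 := mul_eq_one_comm.mp hU
  have hUTB : Uᵀ * B = B := by
    calc Uᵀ * B = Uᵀ * (U * B) := by rw [hUB]
    _ = (Uᵀ * U) * B := by rw [Matrix.mul_assoc]
    _ = B := by rw [hU, Matrix.one_mul]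
  -- transformed data/init laws
  have hdata' := hdata Uᵀ (by rwa [Matrix.transpose_transpose]) hUTB
  have hinit' := hinit U hU
  -- measurable component maps
  have hφmeas : Measurable (fun p : (Fin m → ℝ) × (Fin m → Fin n → ℝ) =>
      (p.1, fun i => Matrix.vecMul (p.2 i) Uᵀ)) := by
    apply measurable_fst.prodMk
    apply measurable_pi_lambda; intro i
    apply measurable_pi_lambda; intro k
    simp only [Matrix.vecMul, dotProduct]
    apply Finset.measurable_sum; intro j _
    exact (((measurable_pi_apply (X := fun _ => ℝ) j).comp
      ((measurable_pi_apply i).comp measurable_snd))).mul measurable_const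
  have hψmeas : Measurable (fun M : Matrix (Fin n) (Fin q) ℝ => U * M) :=
    const_mul_measurable U
  have hyX : Measurable (fun ω => (y ω, X ω)) := hy.prodMk hX
  have hA : Measurable (fun ω => (y ω, fun i => Matrix.vecMul (X ω i) Uᵀ)) :=
    hφmeas.comp hyX
  have hB : Measurable (fun ω => U * W0 ω) := hψmeas.comp hW0
  -- independence of transformed variables
  have hindep' : IndepFun
      (fun ω => (y ω, fun i => Matrix.vecMul (X ω i) Uᵀ)) (fun ω => U * W0 ω) μ :=
    hindep.comp hφmeas hψmeas
  -- joint law equality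
  have hjoint :
      Measure.map (fun ω => ((y ω, fun i => Matrix.vecMul (X ω i) Uᵀ), U * W0 ω)) μ
        = Measure.map (fun ω => ((y ω, X ω), W0 ω)) μ := by
    rw [(indepFun_iff_map_prod_eq_prod_map_map
        hA.aemeasurable hB.aemeasurable).mp hindep',
      (indepFun_iff_map_prod_eq_prod_map_map hyX.aemeasurable hW0.aemeasurable).mp hindep,
      hdata', hinit']
  -- conclude
  have key : (fun ω => U * sgdStep η I dL F gradF (y ω) (X ω) (W0 ω))
      = T ∘ (fun ω => ((y ω, fun i => Matrix.vecMul (X ω i) Uᵀ), U * W0 ω)) := by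
    funext ω
    exact sgd_equivariant η I dL F gradF (y ω) (X ω) (W0 ω) U hU
  have key2 : (fun ω => sgdStep η I dL F gradF (y ω) (X ω) (W0 ω))
      = T ∘ (fun ω => ((y ω, X ω), W0 ω)) := rfl
  have hpair1 : Measurable (fun ω => ((y ω, fun i => Matrix.vecMul (X ω i) Uᵀ), U * W0 ω)) :=
    hA.prodMk hB
  have hpair2 : Measurable (fun ω => ((y ω, X ω), W0 ω)) := hyX.prodMk hW0
  rw [key, key2, ← Measure.map_map hTmeas hpair1, ← Measure.map_map hTmeas hpair2, hjoint]
end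

section
/- Let Φ and φ denote the standard normal cumulative distribution function and density. For every ε ∈ (0,1) and every u ∈ ℝ, both Φ(u/(1−ε)) − Φ(u) ≤ (ε/(1−ε)) · (1/√(2πe)) and Φ(u) − Φ(u/(1+ε)) ≤ (ε/(1−ε)) · (1/√(2πe)); consequently, sup_{u∈ℝ} max{ Φ(u/(1−ε)) − Φ(u), Φ(u) − Φ(u/(1+ε)) } ≤ (ε/(1−ε)) · (1/√(2πe)). -/
/-!
Write `C = 1/√(2πe) = sup_x x φ(x)`. For `c ≥ 1` and `u ≥ 0`, the density is decreasing on
`[u, c u]`, so `Φ(c u) - Φ(u) ≤ (c - 1) u φ(u) ≤ (c - 1) C`; for `u < 0` the difference is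
nonpositive. Both estimates are instances of this: `c = 1/(1-ε)` at `u`, and `c = 1 + ε` at
`u/(1+ε)`, where `ε ≤ ε/(1-ε)`.
-/

open MeasureTheory ProbabilityTheory

/-- The standard normal cumulative distribution function `Φ`. -/
noncomputable def stdGaussCDF (u : ℝ) : ℝ := (gaussianReal 0 1 (Set.Iic u)).toReal

open Real

lemma stdGaussCDF_eq_integral (u : ℝ) :
    stdGaussCDF u = ∫ x in Set.Iic u, gaussianPDFReal 0 1 x := by
  rw [stdGaussCDF, gaussianReal_apply_eq_integral 0 one_ne_zero,
    ENNReal.toReal_ofReal (setIntegral_nonneg measurableSet_Iic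
      fun x _ => gaussianPDFReal_nonneg 0 1 x)]

lemma stdGaussCDF_sub_stdGaussCDF (a b : ℝ) :
    stdGaussCDF b - stdGaussCDF a = ∫ x in a..b, gaussianPDFReal 0 1 x := by
  rw [stdGaussCDF_eq_integral, stdGaussCDF_eq_integral]
  exact intervalIntegral.integral_Iic_sub_Iic (integrable_gaussianPDFReal 0 1).integrableOn
    (integrable_gaussianPDFReal 0 1).integrableOn

lemma stdGaussCDF_mono : Monotone stdGaussCDF := fun a b hab =>
  sub_nonneg.mp <| stdGaussCDF_sub_stdGaussCDF a b ▸
    intervalIntegral.integral_nonneg hab fun x _ => gaussianPDFReal_nonneg 0 1 x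

lemma gaussianPDFReal_zero_one (x : ℝ) :
    gaussianPDFReal 0 1 x = (√(2 * π))⁻¹ * exp (-x ^ 2 / 2) := by
  simp [gaussianPDFReal]

lemma gaussianPDFReal_zero_one_antitoneOn : AntitoneOn (gaussianPDFReal 0 1) (Set.Ici 0) := by
  intro a (ha : 0 ≤ a) x _ hax
  simp only [gaussianPDFReal_zero_one]
  gcongr

lemma mul_gaussianPDFReal_zero_one_le (x : ℝ) :
    x * gaussianPDFReal 0 1 x ≤ 1 / √(2 * π * exp 1) := by
  -- `x ≤ (x² + 1)/2 ≤ exp ((x² - 1)/2)`, with equality at `x = 1`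
  have hx : x ≤ exp (x ^ 2 / 2 - 1 / 2) := by
    nlinarith [add_one_le_exp (x ^ 2 / 2 - 1 / 2), sq_nonneg (x - 1)]
  have hsqrt : √(2 * π * exp 1) = √(2 * π) * exp (1 / 2) := by
    rw [sqrt_mul (by positivity), ← exp_half]
  calc x * gaussianPDFReal 0 1 x
      = (√(2 * π))⁻¹ * (x * exp (-x ^ 2 / 2)) := by rw [gaussianPDFReal_zero_one]; ring
    _ ≤ (√(2 * π))⁻¹ * (exp (x ^ 2 / 2 - 1 / 2) * exp (-x ^ 2 / 2)) := by gcongr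
    _ = 1 / √(2 * π * exp 1) := by
      rw [← exp_add, show x ^ 2 / 2 - 1 / 2 + -x ^ 2 / 2 = -(1 / 2) by ring, exp_neg, hsqrt]
      ring

lemma stdGaussCDF_sub_le_of_nonneg {a b : ℝ} (ha : 0 ≤ a) (hab : a ≤ b) :
    stdGaussCDF b - stdGaussCDF a ≤ (b - a) * gaussianPDFReal 0 1 a := by
  rw [stdGaussCDF_sub_stdGaussCDF]
  calc ∫ x in a..b, gaussianPDFReal 0 1 x
      ≤ ∫ _ in a..b, gaussianPDFReal 0 1 a :=
        intervalIntegral.integral_mono_on hab (integrable_gaussianPDFReal 0 1).intervalIntegrable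
          intervalIntegrable_const fun x hx =>
            gaussianPDFReal_zero_one_antitoneOn ha (ha.trans hx.1) hx.1
    _ = (b - a) * gaussianPDFReal 0 1 a := by simp

lemma stdGaussCDF_mul_sub_le {c : ℝ} (hc : 1 ≤ c) (u : ℝ) :
    stdGaussCDF (c * u) - stdGaussCDF u ≤ (c - 1) * (1 / √(2 * π * exp 1)) := by
  have hC : 0 ≤ (c - 1) * (1 / √(2 * π * exp 1)) := by
    have : 0 ≤ c - 1 := by linarith
    positivity
  rcases lt_or_ge u 0 with hu | hu
  · have : c * u ≤ u := by nlinarith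
    linarith [stdGaussCDF_mono this]
  calc stdGaussCDF (c * u) - stdGaussCDF u
      ≤ (c * u - u) * gaussianPDFReal 0 1 u := stdGaussCDF_sub_le_of_nonneg hu (by nlinarith)
    _ = (c - 1) * (u * gaussianPDFReal 0 1 u) := by ring
    _ ≤ (c - 1) * (1 / √(2 * π * exp 1)) :=
      mul_le_mul_of_nonneg_left (mul_gaussianPDFReal_zero_one_le u) (by linarith)

/-- quantitative stability of the Gaussian CDF under dilation, key analytic
estimate for the uniform convergence in Theorem 3.1: for every `ε ∈ (0,1)` and `u ∈ ℝ`,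
`Φ(u/(1−ε)) − Φ(u) ≤ (ε/(1−ε))·(1/√(2πe))` and
`Φ(u) − Φ(u/(1+ε)) ≤ (ε/(1−ε))·(1/√(2πe))`; consequently the supremum over `u` of the
maximum of the two differences is at most `(ε/(1−ε))·(1/√(2πe))`. -/
theorem stmt9 (ε : ℝ) (hε0 : 0 < ε) (hε1 : ε < 1) :
    (∀ u : ℝ,
      stdGaussCDF (u / (1 - ε)) - stdGaussCDF u
          ≤ ε / (1 - ε) * (1 / Real.sqrt (2 * Real.pi * Real.exp 1)) ∧
      stdGaussCDF u - stdGaussCDF (u / (1 + ε))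
          ≤ ε / (1 - ε) * (1 / Real.sqrt (2 * Real.pi * Real.exp 1))) ∧
    (⨆ u : ℝ, max (stdGaussCDF (u / (1 - ε)) - stdGaussCDF u)
        (stdGaussCDF u - stdGaussCDF (u / (1 + ε))))
      ≤ ε / (1 - ε) * (1 / Real.sqrt (2 * Real.pi * Real.exp 1)) := by
  have h1ε : 0 < 1 - ε := by linarith
  have hbound : ∀ u : ℝ,
      stdGaussCDF (u / (1 - ε)) - stdGaussCDF u ≤ ε / (1 - ε) * (1 / √(2 * π * exp 1)) ∧
      stdGaussCDF u - stdGaussCDF (u / (1 + ε)) ≤ ε / (1 - ε) * (1 / √(2 * π * exp 1)) := by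
    intro u
    constructor
    · have h := stdGaussCDF_mul_sub_le (c := 1 / (1 - ε)) (by rw [le_div_iff₀ h1ε]; linarith) u
      rwa [one_div_mul_eq_div, show 1 / (1 - ε) - 1 = ε / (1 - ε) by field_simp; ring] at h
    · have h := stdGaussCDF_mul_sub_le (c := 1 + ε) (by linarith) (u / (1 + ε))
      rw [mul_div_cancel₀ u (by linarith), add_sub_cancel_left] at h
      refine h.trans (mul_le_mul_of_nonneg_right ?_ (by positivity))
      exact le_div_self hε0.le h1ε (by linarith)
  exact ⟨hbound, ciSup_le fun u => max_le (hbound u).1 (hbound u).2⟩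
end

section
/- Let X₁ and X₂ be independent real random variables with the same distribution, let Z₁, Z₂ be independent standard normal random variables, and set Δ = sup_{u∈ℝ} | ℙ(X₁ > u) − ℙ(Z₁ > u) |. Let ψ : [0,∞)² → [0,∞) be Borel measurable, symmetric in its two arguments, and nondecreasing in each argument, and define M = sign(X₁X₂) ψ(|X₁|, |X₂|) and M̃ = sign(Z₁Z₂) ψ(|Z₁|, |Z₂|). Then sup_{u∈ℝ} | ℙ(M > u) − ℙ(M̃ > u) | ≤ 4Δ. -/
open MeasureTheory ProbabilityTheory

/-- The mirror statistic `sign(ab)·ψ(|a|,|b|)` built from two importance scores. -/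
noncomputable def mirrorStat (ψ : ℝ → ℝ → ℝ) (a b : ℝ) : ℝ :=
  Real.sign (a * b) * ψ |a| |b|

namespace Stmt12Aux

open Set Filter Topology
open scoped ENNReal

/-- A "ray": an up-closed or down-closed subset of ℝ. -/
def IsRay (T : Set ℝ) : Prop :=
  (∀ ⦃y y'⦄, y ∈ T → y ≤ y' → y' ∈ T) ∨ (∀ ⦃y y'⦄, y ∈ T → y' ≤ y → y' ∈ T)

lemma toReal_mono' (ν : Measure ℝ) [IsProbabilityMeasure ν] {s t : Set ℝ} (h : s ⊆ t) :
    (ν s).toReal ≤ (ν t).toReal :=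
  ENNReal.toReal_mono (measure_ne_top ν t) (measure_mono h)

lemma rayUp (ν γ : Measure ℝ) [IsProbabilityMeasure ν] [IsProbabilityMeasure γ]
    (hγa : ∀ c : ℝ, γ {c} = 0) {Δ : ℝ}
    (h : ∀ u : ℝ, |(ν (Ioi u)).toReal - (γ (Ioi u)).toReal| ≤ Δ)
    {T : Set ℝ} (hT : ∀ ⦃y y'⦄, y ∈ T → y ≤ y' → y' ∈ T) :
    |(ν T).toReal - (γ T).toReal| ≤ Δ := by
  have hΔ0 : 0 ≤ Δ := le_trans (abs_nonneg _) (h 0)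
  rcases T.eq_empty_or_nonempty with rfl | hne
  · simpa using hΔ0
  by_cases hbdd : BddBelow T
  · set c := sInf T with hc
    have hTIci : T ⊆ Ici c := fun t ht => csInf_le hbdd ht
    have hIoiT : Ioi c ⊆ T := by
      intro y hy
      obtain ⟨t, htT, hty⟩ := exists_lt_of_csInf_lt hne hy
      exact hT htT hty.le
    have hγeq : (γ (Ici c)).toReal = (γ (Ioi c)).toReal := by
      have h1 : γ (Ici c) ≤ γ (Ioi c) := by
        have hsub : Ici c ⊆ {c} ∪ Ioi c := by
          intro x hx
          rcases eq_or_lt_of_le (mem_Ici.mp hx) with hxe | hxl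
          · exact Or.inl (by simp [hxe.symm])
          · exact Or.inr hxl
        calc γ (Ici c) ≤ γ ({c} ∪ Ioi c) := measure_mono hsub
          _ ≤ γ {c} + γ (Ioi c) := measure_union_le _ _
          _ = γ (Ioi c) := by rw [hγa c, zero_add]
      have h2 : γ (Ioi c) ≤ γ (Ici c) := measure_mono Ioi_subset_Ici_self
      rw [le_antisymm h1 h2]
    have hνlim : (ν (Ici c)).toReal ≤ (γ (Ici c)).toReal + Δ := by
      set s : ℕ → Set ℝ := fun n => Ioi (c - 1 / (n + 1)) with hs
      have hpos : ∀ n : ℕ, (0 : ℝ) < 1 / (n + 1) := by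
        intro n; positivity
      have hanti : Antitone s := by
        intro n m hnm
        apply Ioi_subset_Ioi
        have : (1 : ℝ) / (m + 1) ≤ 1 / (n + 1) := by
          apply one_div_le_one_div_of_le
          · positivity
          · exact_mod_cast add_le_add_left (Nat.cast_le.mpr hnm) 1
        linarith
      have hiInter : (⋂ n, s n) = Ici c := by
        ext x
        simp only [mem_iInter, hs, mem_Ioi, mem_Ici]
        constructor
        · intro hx
          by_contra hcx
          push_neg at hcx
          obtain ⟨n, hn⟩ := exists_nat_one_div_lt (sub_pos.mpr hcx)
          have := hx n
          linarith
        · intro hx n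
          have := hpos n
          linarith
      have htend0 : Tendsto (fun n => γ (s n)) atTop (𝓝 (γ (Ici c))) := by
        have := tendsto_measure_iInter_atTop (μ := γ)
          (fun n => measurableSet_Ioi.nullMeasurableSet) hanti ⟨0, measure_ne_top _ _⟩
        rwa [hiInter] at this
      have htend : Tendsto (fun n => (γ (s n)).toReal + Δ) atTop
          (𝓝 ((γ (Ici c)).toReal + Δ)) :=
        Tendsto.add_const Δ ((ENNReal.tendsto_toReal (measure_ne_top _ _)).comp htend0)
      refine ge_of_tendsto' htend fun n => ?_
      have hsub : Ici c ⊆ s n := by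
        intro x hx
        have := hpos n
        simp only [hs, mem_Ioi]
        have := mem_Ici.mp hx
        linarith
      have h1 : (ν (Ici c)).toReal ≤ (ν (s n)).toReal := toReal_mono' ν hsub
      have h2 := abs_le.mp (h (c - 1 / (n + 1)))
      simp only [hs] at h1 ⊢
      linarith [h2.1]
    rw [abs_sub_le_iff]
    constructor
    · have h1 : (ν T).toReal ≤ (ν (Ici c)).toReal := toReal_mono' ν hTIci
      have h2 : (γ (Ioi c)).toReal ≤ (γ T).toReal := toReal_mono' γ hIoiT
      linarith
    · have h1 : (γ T).toReal ≤ (γ (Ici c)).toReal := toReal_mono' γ hTIci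
      have h2 : (ν (Ioi c)).toReal ≤ (ν T).toReal := toReal_mono' ν hIoiT
      have h3 := abs_le.mp (h c)
      linarith [h3.2]
  · have hTuniv : T = univ := by
      ext y
      simp only [mem_univ, iff_true]
      obtain ⟨t, htT, hty⟩ := not_bddBelow_iff.mp hbdd y
      exact hT htT hty.le
    subst hTuniv
    simp [measure_univ, hΔ0]

lemma rayDown (ν γ : Measure ℝ) [IsProbabilityMeasure ν] [IsProbabilityMeasure γ]
    (hγa : ∀ c : ℝ, γ {c} = 0) {Δ : ℝ}
    (h : ∀ u : ℝ, |(ν (Ioi u)).toReal - (γ (Ioi u)).toReal| ≤ Δ)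
    {T : Set ℝ} (hTm : MeasurableSet T)
    (hT : ∀ ⦃y y'⦄, y ∈ T → y' ≤ y → y' ∈ T) :
    |(ν T).toReal - (γ T).toReal| ≤ Δ := by
  have hup : ∀ ⦃y y'⦄, y ∈ Tᶜ → y ≤ y' → y' ∈ Tᶜ := fun y y' hy hle hy' => hy (hT hy' hle)
  have key := rayUp ν γ hγa h hup
  have hν : (ν T).toReal + (ν Tᶜ).toReal = 1 := by
    rw [← ENNReal.toReal_add (measure_ne_top _ _) (measure_ne_top _ _),
      measure_add_measure_compl hTm, measure_univ, ENNReal.toReal_one]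
  have hγ : (γ T).toReal + (γ Tᶜ).toReal = 1 := by
    rw [← ENNReal.toReal_add (measure_ne_top _ _) (measure_ne_top _ _),
      measure_add_measure_compl hTm, measure_univ, ENNReal.toReal_one]
  have heq : (ν T).toReal - (γ T).toReal = -((ν Tᶜ).toReal - (γ Tᶜ).toReal) := by linarith
  rw [heq, abs_neg]
  exact key

lemma ray_bound (ν γ : Measure ℝ) [IsProbabilityMeasure ν] [IsProbabilityMeasure γ]
    (hγa : ∀ c : ℝ, γ {c} = 0) {Δ : ℝ}
    (h : ∀ u : ℝ, |(ν (Ioi u)).toReal - (γ (Ioi u)).toReal| ≤ Δ)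
    {T : Set ℝ} (hTm : MeasurableSet T) (hT : IsRay T) :
    |(ν T).toReal - (γ T).toReal| ≤ Δ :=
  hT.elim (fun h' => rayUp ν γ hγa h h') (fun h' => rayDown ν γ hγa h hTm h')

lemma lintegral_diff_le (ρ : Measure ℝ) [IsProbabilityMeasure ρ] {Δ : ℝ}
    {f g : ℝ → ℝ≥0∞} (hf : Measurable f) (hg : Measurable g)
    (hfg : ∀ x, |(f x).toReal - (g x).toReal| ≤ Δ)
    (hf1 : ∀ x, f x ≤ 1) (hg1 : ∀ x, g x ≤ 1) :
    |(∫⁻ x, f x ∂ρ).toReal - (∫⁻ x, g x ∂ρ).toReal| ≤ Δ := by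
  have hflt : ∀ᵐ x ∂ρ, f x < ∞ :=
    ae_of_all _ fun x => lt_of_le_of_lt (hf1 x) ENNReal.one_lt_top
  have hglt : ∀ᵐ x ∂ρ, g x < ∞ :=
    ae_of_all _ fun x => lt_of_le_of_lt (hg1 x) ENNReal.one_lt_top
  rw [← integral_toReal hf.aemeasurable hflt, ← integral_toReal hg.aemeasurable hglt]
  have hbf : ∀ x, ‖(f x).toReal‖ ≤ 1 := by
    intro x
    rw [Real.norm_eq_abs, abs_of_nonneg ENNReal.toReal_nonneg]
    simpa using ENNReal.toReal_mono ENNReal.one_ne_top (hf1 x)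
  have hbg : ∀ x, ‖(g x).toReal‖ ≤ 1 := by
    intro x
    rw [Real.norm_eq_abs, abs_of_nonneg ENNReal.toReal_nonneg]
    simpa using ENNReal.toReal_mono ENNReal.one_ne_top (hg1 x)
  have hif : Integrable (fun x => (f x).toReal) ρ :=
    Integrable.mono' (integrable_const 1) hf.ennreal_toReal.aestronglyMeasurable
      (ae_of_all _ hbf)
  have hig : Integrable (fun x => (g x).toReal) ρ :=
    Integrable.mono' (integrable_const 1) hg.ennreal_toReal.aestronglyMeasurable
      (ae_of_all _ hbg)
  rw [← integral_sub hif hig]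
  calc |∫ x, ((f x).toReal - (g x).toReal) ∂ρ|
      ≤ ∫ x, |(f x).toReal - (g x).toReal| ∂ρ := by
        simpa [Real.norm_eq_abs] using norm_integral_le_integral_norm
          (fun x => (f x).toReal - (g x).toReal) (μ := ρ)
    _ ≤ ∫ _x, Δ ∂ρ := integral_mono (hif.sub hig).abs (integrable_const Δ) hfg
    _ = Δ := by simp

lemma prod_bound (ν γ : Measure ℝ) [IsProbabilityMeasure ν] [IsProbabilityMeasure γ]
    (hγa : ∀ c : ℝ, γ {c} = 0) {Δ : ℝ}
    (h : ∀ u : ℝ, |(ν (Ioi u)).toReal - (γ (Ioi u)).toReal| ≤ Δ)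
    {A : Set (ℝ × ℝ)} (hA : MeasurableSet A)
    (hsec : ∀ x : ℝ, IsRay {y | (x, y) ∈ A})
    (hcosec : ∀ y : ℝ, IsRay {x | (x, y) ∈ A}) :
    |(ν.prod ν A).toReal - (γ.prod γ A).toReal| ≤ 2 * Δ := by
  have hsecm : ∀ x : ℝ, MeasurableSet (Prod.mk x ⁻¹' A) :=
    fun x => hA.preimage measurable_prodMk_left
  have hcosecm : ∀ y : ℝ, MeasurableSet ((fun x => (x, y)) ⁻¹' A) :=
    fun y => hA.preimage measurable_prodMk_right
  have step1 : |(ν.prod ν A).toReal - (ν.prod γ A).toReal| ≤ Δ := by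
    rw [Measure.prod_apply hA, Measure.prod_apply hA]
    apply lintegral_diff_le ν (measurable_measure_prodMk_left hA)
      (measurable_measure_prodMk_left hA)
    · intro x
      exact ray_bound ν γ hγa h (hsecm x) (hsec x)
    · intro x; exact prob_le_one
    · intro x; exact prob_le_one
  have step2 : |(ν.prod γ A).toReal - (γ.prod γ A).toReal| ≤ Δ := by
    rw [Measure.prod_apply_symm hA, Measure.prod_apply_symm hA]
    apply lintegral_diff_le γ (measurable_measure_prodMk_right hA)
      (measurable_measure_prodMk_right hA)
    · intro y
      exact ray_bound ν γ hγa h (hcosecm y) (hcosec y)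
    · intro y; exact prob_le_one
    · intro y; exact prob_le_one
  calc |(ν.prod ν A).toReal - (γ.prod γ A).toReal|
      ≤ |(ν.prod ν A).toReal - (ν.prod γ A).toReal|
        + |(ν.prod γ A).toReal - (γ.prod γ A).toReal| := abs_sub_le _ _ _
    _ ≤ Δ + Δ := add_le_add step1 step2
    _ = 2 * Δ := by ring

lemma measurable_realSign : Measurable Real.sign := by
  have : (Real.sign : ℝ → ℝ) = fun r => if r < 0 then (-1 : ℝ) else if 0 < r then 1 else 0 :=
    rfl
  rw [this]
  exact Measurable.ite (measurableSet_lt measurable_id measurable_const) measurable_const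
    (Measurable.ite (measurableSet_lt measurable_const measurable_id) measurable_const
      measurable_const)

end Stmt12Aux

open Set Stmt12Aux

/-- quantitative transfer of the Kolmogorov distance through the mirror
statistic, the content of the proof of Lemma A.4: if `X₁, X₂` are i.i.d., `Δ` bounds the
Kolmogorov distance `sup_u |ℙ(X₁ > u) − ℙ(Z₁ > u)|` to the standard normal, and `ψ` is
Borel, nonnegative, symmetric and nondecreasing in each argument, then for every `u`,
`|ℙ(M > u) − ℙ(M̃ > u)| ≤ 4Δ`, where `M = sign(X₁X₂)ψ(|X₁|,|X₂|)` and `M̃` is its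
counterpart built from two independent standard normals. -/
theorem stmt12 {Ω : Type*} [MeasurableSpace Ω] (μ : Measure Ω) [IsProbabilityMeasure μ]
    (X₁ X₂ : Ω → ℝ) (h₁ : Measurable X₁) (h₂ : Measurable X₂)
    (hid : Measure.map X₁ μ = Measure.map X₂ μ)
    (hindep : IndepFun X₁ X₂ μ)
    (Δ : ℝ)
    (hΔ : ∀ u : ℝ, |(μ {ω | u < X₁ ω}).toReal - (gaussianReal 0 1 (Set.Ioi u)).toReal| ≤ Δ)
    (ψ : ℝ → ℝ → ℝ) (hψ : Measurable fun p : ℝ × ℝ => ψ p.1 p.2)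
    (hψ0 : ∀ s t : ℝ, 0 ≤ ψ s t)
    (hψsymm : ∀ s t : ℝ, 0 ≤ s → 0 ≤ t → ψ s t = ψ t s)
    (hψmono₁ : ∀ s s' t : ℝ, 0 ≤ s → s ≤ s' → 0 ≤ t → ψ s t ≤ ψ s' t)
    (hψmono₂ : ∀ s t t' : ℝ, 0 ≤ s → 0 ≤ t → t ≤ t' → ψ s t ≤ ψ s t') :
    ∀ u : ℝ,
      |(μ {ω | u < mirrorStat ψ (X₁ ω) (X₂ ω)}).toReal
          - (((gaussianReal 0 1).prod (gaussianReal 0 1))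
              {p : ℝ × ℝ | u < mirrorStat ψ p.1 p.2}).toReal|
        ≤ 4 * Δ := by
  classical
  intro u
  set γ : Measure ℝ := gaussianReal 0 1 with hγdef
  have hΔ0 : 0 ≤ Δ := le_trans (abs_nonneg _) (hΔ 0)
  -- the Gaussian has no atoms
  have hγa : ∀ c : ℝ, γ {c} = 0 := by
    intro c
    rw [hγdef, gaussianReal_of_var_ne_zero 0 one_ne_zero,
      withDensity_apply _ (measurableSet_singleton c)]
    exact setLIntegral_measure_zero _ _ (measure_singleton c)
  -- the law of X₁
  set ν : Measure ℝ := Measure.map X₁ μ with hνdef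
  haveI : IsProbabilityMeasure ν := Measure.isProbabilityMeasure_map h₁.aemeasurable
  have htail : ∀ v : ℝ, |(ν (Ioi v)).toReal - (γ (Ioi v)).toReal| ≤ Δ := by
    intro v
    have hmap : ν (Ioi v) = μ {ω | v < X₁ ω} := by
      rw [hνdef, Measure.map_apply h₁ measurableSet_Ioi]
      rfl
    rw [hmap]
    exact hΔ v
  -- measurability of the mirror statistic
  have hM : Measurable fun p : ℝ × ℝ => mirrorStat ψ p.1 p.2 := by
    unfold mirrorStat
    exact (measurable_realSign.comp (measurable_fst.mul measurable_snd)).mul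
      (hψ.comp ((measurable_fst.abs).prodMk (measurable_snd.abs)))
  set S : Set (ℝ × ℝ) := {p : ℝ × ℝ | u < mirrorStat ψ p.1 p.2} with hSdef
  have hSm : MeasurableSet S := measurableSet_lt measurable_const hM
  -- rewrite the LHS probability via the joint law
  have hpair : Measure.map (fun ω => (X₁ ω, X₂ ω)) μ = ν.prod ν := by
    have hmap := (indepFun_iff_map_prod_eq_prod_map_map h₁.aemeasurable h₂.aemeasurable).mp
      hindep
    rw [hmap, ← hid, ← hνdef]
  have hLHS : μ {ω | u < mirrorStat ψ (X₁ ω) (X₂ ω)} = (ν.prod ν) S := by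
    rw [← hpair, Measure.map_apply (h₁.prodMk h₂) hSm]
    rfl
  rw [hLHS]
  rcases le_or_gt 0 u with hu | hu
  · -- nonnegative threshold: split into the two positive-sign quadrants
    set Ap : Set (ℝ × ℝ) := {p | 0 < p.1 ∧ 0 < p.2 ∧ u < ψ p.1 p.2} with hApdef
    set Am : Set (ℝ × ℝ) := {p | p.1 < 0 ∧ p.2 < 0 ∧ u < ψ (-p.1) (-p.2)} with hAmdef
    have hApm : MeasurableSet Ap :=
      (measurableSet_lt measurable_const measurable_fst).inter
        ((measurableSet_lt measurable_const measurable_snd).inter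
          (measurableSet_lt measurable_const hψ))
    have hAmm : MeasurableSet Am :=
      (measurableSet_lt measurable_fst measurable_const).inter
        ((measurableSet_lt measurable_snd measurable_const).inter
          (measurableSet_lt measurable_const
            (hψ.comp ((measurable_fst.neg).prodMk (measurable_snd.neg)))))
    have hS : S = Ap ∪ Am := by
      ext p
      obtain ⟨a, b⟩ := p
      simp only [hSdef, hApdef, hAmdef, mem_setOf_eq, mem_union, mirrorStat]
      constructor
      · intro hab
        rcases lt_trichotomy (a * b) 0 with hneg | hzero | hpos
        · exfalso
          rw [Real.sign_of_neg hneg] at hab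
          have := hψ0 |a| |b|
          linarith
        · exfalso
          rw [hzero, Real.sign_zero, zero_mul] at hab
          linarith
        · rw [Real.sign_of_pos hpos, one_mul] at hab
          rcases mul_pos_iff.mp hpos with ⟨ha, hb⟩ | ⟨ha, hb⟩
          · exact Or.inl ⟨ha, hb, by rwa [abs_of_pos ha, abs_of_pos hb] at hab⟩
          · exact Or.inr ⟨ha, hb, by rwa [abs_of_neg ha, abs_of_neg hb] at hab⟩
      · rintro (⟨ha, hb, hu'⟩ | ⟨ha, hb, hu'⟩)
        · have hpos : 0 < a * b := mul_pos ha hb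
          rw [Real.sign_of_pos hpos, one_mul, abs_of_pos ha, abs_of_pos hb]
          exact hu'
        · have hpos : 0 < a * b := mul_pos_of_neg_of_neg ha hb
          rw [Real.sign_of_pos hpos, one_mul, abs_of_neg ha, abs_of_neg hb]
          exact hu'
    have hdisj : Disjoint Ap Am := by
      rw [Set.disjoint_left]
      rintro ⟨a, b⟩ ⟨ha, -, -⟩ ⟨ha', -, -⟩
      exact absurd ha (not_lt.mpr ha'.le)
    have hsplitν : ((ν.prod ν) S).toReal
        = ((ν.prod ν) Ap).toReal + ((ν.prod ν) Am).toReal := by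
      rw [hS, measure_union hdisj hAmm,
        ENNReal.toReal_add (measure_ne_top _ _) (measure_ne_top _ _)]
    have hsplitγ : ((γ.prod γ) S).toReal
        = ((γ.prod γ) Ap).toReal + ((γ.prod γ) Am).toReal := by
      rw [hS, measure_union hdisj hAmm,
        ENNReal.toReal_add (measure_ne_top _ _) (measure_ne_top _ _)]
    have secAp : ∀ x : ℝ, IsRay {y | (x, y) ∈ Ap} := by
      intro x
      left
      rintro y y' ⟨hx, hy, hu'⟩ hle
      exact ⟨hx, lt_of_lt_of_le hy hle, lt_of_lt_of_le hu' (hψmono₂ x y y' hx.le hy.le hle)⟩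
    have cosecAp : ∀ y : ℝ, IsRay {x | (x, y) ∈ Ap} := by
      intro y
      left
      rintro x x' ⟨hx, hy, hu'⟩ hle
      exact ⟨lt_of_lt_of_le hx hle, hy, lt_of_lt_of_le hu' (hψmono₁ x x' y hx.le hle hy.le)⟩
    have secAm : ∀ x : ℝ, IsRay {y | (x, y) ∈ Am} := by
      intro x
      right
      rintro y y' ⟨hx, hy, hu'⟩ hle
      exact ⟨hx, lt_of_le_of_lt hle hy,
        lt_of_lt_of_le hu' (hψmono₂ (-x) (-y) (-y') (by linarith) (by linarith) (by linarith))⟩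
    have cosecAm : ∀ y : ℝ, IsRay {x | (x, y) ∈ Am} := by
      intro y
      right
      rintro x x' ⟨hx, hy, hu'⟩ hle
      exact ⟨lt_of_le_of_lt hle hx, hy,
        lt_of_lt_of_le hu' (hψmono₁ (-x) (-x') (-y) (by linarith) (by linarith) (by linarith))⟩
    have bAp := prod_bound ν γ hγa htail hApm secAp cosecAp
    have bAm := prod_bound ν γ hγa htail hAmm secAm cosecAm
    have e1 := abs_le.mp bAp
    have e2 := abs_le.mp bAm
    rw [hsplitν, hsplitγ, abs_le]
    constructor <;> linarith [e1.1, e1.2, e2.1, e2.2]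
  · -- negative threshold: work with the complement, split into the mixed-sign quadrants
    set Bp : Set (ℝ × ℝ) := {p | 0 < p.1 ∧ p.2 < 0 ∧ -u ≤ ψ p.1 (-p.2)} with hBpdef
    set Bm : Set (ℝ × ℝ) := {p | p.1 < 0 ∧ 0 < p.2 ∧ -u ≤ ψ (-p.1) p.2} with hBmdef
    have hBpm : MeasurableSet Bp :=
      (measurableSet_lt measurable_const measurable_fst).inter
        ((measurableSet_lt measurable_snd measurable_const).inter
          (measurableSet_le measurable_const
            (hψ.comp (measurable_fst.prodMk (measurable_snd.neg)))))
    have hBmm : MeasurableSet Bm :=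
      (measurableSet_lt measurable_fst measurable_const).inter
        ((measurableSet_lt measurable_const measurable_snd).inter
          (measurableSet_le measurable_const
            (hψ.comp ((measurable_fst.neg).prodMk measurable_snd))))
    have hSc : Sᶜ = Bp ∪ Bm := by
      ext p
      obtain ⟨a, b⟩ := p
      simp only [hSdef, hBpdef, hBmdef, mem_compl_iff, mem_setOf_eq, not_lt, mem_union,
        mirrorStat]
      constructor
      · intro hab
        rcases lt_trichotomy (a * b) 0 with hneg | hzero | hpos
        · rw [Real.sign_of_neg hneg] at hab
          rcases mul_neg_iff.mp hneg with ⟨ha, hb⟩ | ⟨ha, hb⟩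
          · refine Or.inl ⟨ha, hb, ?_⟩
            rw [abs_of_pos ha, abs_of_neg hb] at hab
            linarith
          · refine Or.inr ⟨ha, hb, ?_⟩
            rw [abs_of_neg ha, abs_of_pos hb] at hab
            linarith
        · exfalso
          rw [hzero, Real.sign_zero, zero_mul] at hab
          linarith
        · exfalso
          rw [Real.sign_of_pos hpos, one_mul] at hab
          have := hψ0 |a| |b|
          linarith
      · rintro (⟨ha, hb, hu'⟩ | ⟨ha, hb, hu'⟩)
        · have hneg : a * b < 0 := mul_neg_of_pos_of_neg ha hb
          rw [Real.sign_of_neg hneg, abs_of_pos ha, abs_of_neg hb]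
          linarith
        · have hneg : a * b < 0 := mul_neg_of_neg_of_pos ha hb
          rw [Real.sign_of_neg hneg, abs_of_neg ha, abs_of_pos hb]
          linarith
    have hdisj : Disjoint Bp Bm := by
      rw [Set.disjoint_left]
      rintro ⟨a, b⟩ ⟨ha, -, -⟩ ⟨ha', -, -⟩
      exact absurd ha (not_lt.mpr ha'.le)
    have hcν : ((ν.prod ν) S).toReal = 1 - ((ν.prod ν) Sᶜ).toReal := by
      have h0 := measure_add_measure_compl (μ := ν.prod ν) hSm
      rw [measure_univ] at h0
      have h1 := congrArg ENNReal.toReal h0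
      rw [ENNReal.toReal_add (measure_ne_top _ _) (measure_ne_top _ _),
        ENNReal.toReal_one] at h1
      linarith
    have hcγ : ((γ.prod γ) S).toReal = 1 - ((γ.prod γ) Sᶜ).toReal := by
      have h0 := measure_add_measure_compl (μ := γ.prod γ) hSm
      rw [measure_univ] at h0
      have h1 := congrArg ENNReal.toReal h0
      rw [ENNReal.toReal_add (measure_ne_top _ _) (measure_ne_top _ _),
        ENNReal.toReal_one] at h1
      linarith
    have hsplitν : ((ν.prod ν) Sᶜ).toReal
        = ((ν.prod ν) Bp).toReal + ((ν.prod ν) Bm).toReal := by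
      rw [hSc, measure_union hdisj hBmm,
        ENNReal.toReal_add (measure_ne_top _ _) (measure_ne_top _ _)]
    have hsplitγ : ((γ.prod γ) Sᶜ).toReal
        = ((γ.prod γ) Bp).toReal + ((γ.prod γ) Bm).toReal := by
      rw [hSc, measure_union hdisj hBmm,
        ENNReal.toReal_add (measure_ne_top _ _) (measure_ne_top _ _)]
    have secBp : ∀ x : ℝ, IsRay {y | (x, y) ∈ Bp} := by
      intro x
      right
      rintro y y' ⟨hx, hy, hu'⟩ hle
      exact ⟨hx, lt_of_le_of_lt hle hy,
        le_trans hu' (hψmono₂ x (-y) (-y') hx.le (by linarith) (by linarith))⟩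
    have cosecBp : ∀ y : ℝ, IsRay {x | (x, y) ∈ Bp} := by
      intro y
      left
      rintro x x' ⟨hx, hy, hu'⟩ hle
      exact ⟨lt_of_lt_of_le hx hle, hy,
        le_trans hu' (hψmono₁ x x' (-y) hx.le hle (by linarith))⟩
    have secBm : ∀ x : ℝ, IsRay {y | (x, y) ∈ Bm} := by
      intro x
      left
      rintro y y' ⟨hx, hy, hu'⟩ hle
      exact ⟨hx, lt_of_lt_of_le hy hle,
        le_trans hu' (hψmono₂ (-x) y y' (by linarith) hy.le hle)⟩
    have cosecBm : ∀ y : ℝ, IsRay {x | (x, y) ∈ Bm} := by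
      intro y
      right
      rintro x x' ⟨hx, hy, hu'⟩ hle
      exact ⟨lt_of_le_of_lt hle hx, hy,
        le_trans hu' (hψmono₁ (-x) (-x') y (by linarith) (by linarith) hy.le)⟩
    have bBp := prod_bound ν γ hγa htail hBpm secBp cosecBp
    have bBm := prod_bound ν γ hγa htail hBmm secBm cosecBm
    have e1 := abs_le.mp bBp
    have e2 := abs_le.mp bBm
    rw [hcν, hcγ, hsplitν, hsplitγ, abs_le]
    constructor <;> linarith [e1.1, e1.2, e2.1, e2.2]
end

section
/- Let B ∈ ℝ^{n×q*} have rank r < n, write P_B = B(BᵀB)⁺Bᵀ and P_B^⊥ = I_n − P_B, and let X be a random m×n real matrix with 𝔼‖X‖_F² < ∞ that is B-right-orthogonally invariant, i.e., X has the same distribution as XU for every orthogonal U ∈ ℝ^{n×n} with UB = B. Then the second-moment matrix Σ = 𝔼[XᵀX] satisfies P_B Σ P_B^⊥ = 0 and there exists c ≥ 0 such that P_B^⊥ Σ P_B^⊥ = c · P_B^⊥. -/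
open MeasureTheory ProbabilityTheory Matrix

/-- `P` is the orthogonal projection matrix `P_B = B(BᵀB)⁺Bᵀ` onto `Col(B)`: it is
symmetric, idempotent, its range lies in the column space of `B`, and it fixes `Col(B)`. -/
def IsColProj {n q : ℕ} (B : Matrix (Fin n) (Fin q) ℝ) (P : Matrix (Fin n) (Fin n) ℝ) : Prop :=
  Pᵀ = P ∧ P * P = P ∧ (∀ v : Fin n → ℝ, P.mulVec v ∈ LinearMap.range B.mulVecLin) ∧
    ∀ v ∈ LinearMap.range B.mulVecLin, P.mulVec v = v

/-- Two square matrices acting identically on all vectors are equal. -/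
lemma mulVec_ext_aux {n : ℕ} {N₁ N₂ : Matrix (Fin n) (Fin n) ℝ}
    (h : ∀ v : Fin n → ℝ, N₁.mulVec v = N₂.mulVec v) : N₁ = N₂ := by
  ext i j
  have h12 := congrFun (h (Pi.single j 1)) i
  simpa [Matrix.mulVec, dotProduct, Pi.single_apply, mul_ite, mul_one, mul_zero,
    Finset.sum_ite_eq'] using h12

/-- coordinate-free form of eq. (BROI-second), Appendix C.4: if `X` is a
`B`-right-orthogonally invariant random design with `𝔼‖X‖_F² < ∞` and `B` has rank `r < n`,
then `Σ = 𝔼[XᵀX]` satisfies `P_B Σ P_B^⊥ = 0` and `P_B^⊥ Σ P_B^⊥ = c·P_B^⊥` for some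
`c ≥ 0`, where `P_B^⊥ = I − P_B`. -/
theorem stmt18 {m n qs : ℕ} (B : Matrix (Fin n) (Fin qs) ℝ) (r : ℕ)
    (hrank : B.rank = r) (hr : r < n)
    (P : Matrix (Fin n) (Fin n) ℝ) (hP : IsColProj B P)
    {Ω : Type*} [MeasurableSpace Ω] (μ : Measure Ω) [IsProbabilityMeasure μ]
    (X : Ω → Fin m → Fin n → ℝ) (hX : Measurable X)
    (hint : Integrable (fun ω => ∑ i, ∑ k, (X ω i k) ^ 2) μ)
    (hroi : ∀ U : Matrix (Fin n) (Fin n) ℝ, Uᵀ * U = 1 → U * B = B →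
      Measure.map (fun ω => fun i => Matrix.vecMul (X ω i) U) μ = Measure.map X μ) :
    P * (Matrix.of fun k l => ∫ ω, ∑ i, X ω i k * X ω i l ∂μ) * (1 - P) = 0 ∧
    ∃ c : ℝ, 0 ≤ c ∧
      (1 - P) * (Matrix.of fun k l => ∫ ω, ∑ i, X ω i k * X ω i l ∂μ) * (1 - P)
        = c • (1 - P) := by
  obtain ⟨hPt, hPP, hPrange, hPfix⟩ := hP
  set Sg : Matrix (Fin n) (Fin n) ℝ :=
    Matrix.of fun k l => ∫ ω, ∑ i, X ω i k * X ω i l ∂μ with hSgdef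
  -- measurability of entries
  have hXm : ∀ (i : Fin m) (a : Fin n), Measurable fun ω => X ω i a := fun i a =>
    (measurable_pi_apply a).comp ((measurable_pi_apply i).comp hX)
  -- each square is dominated by the total Frobenius sum
  have hsq : ∀ (i : Fin m) (a : Fin n) (ω : Ω),
      X ω i a ^ 2 ≤ ∑ i', ∑ k, X ω i' k ^ 2 := by
    intro i a ω
    have h1 : X ω i a ^ 2 ≤ ∑ k, X ω i k ^ 2 :=
      Finset.single_le_sum (f := fun k => X ω i k ^ 2) (fun k _ => sq_nonneg _)
        (Finset.mem_univ a)
    exact le_trans h1 (Finset.single_le_sum (f := fun i' => ∑ k, X ω i' k ^ 2)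
      (fun i' _ => Finset.sum_nonneg fun k _ => sq_nonneg _) (Finset.mem_univ i))
  -- integrability of products of entries
  have hI2 : ∀ (i : Fin m) (a b : Fin n), Integrable (fun ω => X ω i a * X ω i b) μ := by
    intro i a b
    refine Integrable.mono' (hint.const_mul 2)
      (((hXm i a).mul (hXm i b)).aestronglyMeasurable) ?_
    filter_upwards with ω
    have h1 := hsq i a ω
    have h2 := hsq i b ω
    have h3 : |X ω i a * X ω i b| ≤ X ω i a ^ 2 + X ω i b ^ 2 := by
      rw [abs_mul]
      nlinarith [sq_nonneg (|X ω i a| - |X ω i b|), sq_abs (X ω i a), sq_abs (X ω i b),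
        abs_nonneg (X ω i a), abs_nonneg (X ω i b)]
    simp only [Real.norm_eq_abs]
    linarith
  set J : Fin m → Fin n → Fin n → ℝ := fun i a b => ∫ ω, X ω i a * X ω i b ∂μ with hJdef
  have hSg : ∀ a b, Sg a b = ∑ i, J i a b := by
    intro a b
    simpa [hSgdef, hJdef] using integral_finset_sum Finset.univ (fun i _ => hI2 i a b)
  -- master expansion lemma
  have master : ∀ u v : Fin n → ℝ,
      ∫ ω, ∑ i, (∑ a, X ω i a * u a) * (∑ b, X ω i b * v b) ∂μ
        = ∑ i, ∑ a, ∑ b, u a * v b * J i a b := by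
    intro u v
    have hpt : (fun ω => ∑ i, (∑ a, X ω i a * u a) * (∑ b, X ω i b * v b))
        = fun ω => ∑ i, ∑ a, ∑ b, u a * v b * (X ω i a * X ω i b) := by
      funext ω
      refine Finset.sum_congr rfl fun i _ => ?_
      rw [Finset.sum_mul_sum]
      refine Finset.sum_congr rfl fun a _ => ?_
      refine Finset.sum_congr rfl fun b _ => ?_
      ring
    have hib : ∀ (i : Fin m) (a b : Fin n),
        Integrable (fun ω => u a * v b * (X ω i a * X ω i b)) μ := fun i a b =>
      (hI2 i a b).const_mul _
    have hia : ∀ (i : Fin m) (a : Fin n),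
        Integrable (fun ω => ∑ b, u a * v b * (X ω i a * X ω i b)) μ := fun i a =>
      integrable_finset_sum _ fun b _ => hib i a b
    have hii : ∀ (i : Fin m),
        Integrable (fun ω => ∑ a, ∑ b, u a * v b * (X ω i a * X ω i b)) μ := fun i =>
      integrable_finset_sum _ fun a _ => hia i a
    rw [hpt, integral_finset_sum _ (fun i _ => hii i)]
    refine Finset.sum_congr rfl fun i _ => ?_
    rw [integral_finset_sum _ (fun a _ => hia i a)]
    refine Finset.sum_congr rfl fun a _ => ?_
    rw [integral_finset_sum _ (fun b _ => hib i a b)]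
    refine Finset.sum_congr rfl fun b _ => ?_
    exact integral_const_mul _ _
  -- push the i-sum inside
  have rearr : ∀ u v : Fin n → ℝ,
      (∑ i, ∑ a, ∑ b, u a * v b * J i a b) = ∑ a, ∑ b, u a * v b * Sg a b := by
    intro u v
    rw [Finset.sum_comm]
    refine Finset.sum_congr rfl fun a _ => ?_
    rw [Finset.sum_comm]
    refine Finset.sum_congr rfl fun b _ => ?_
    rw [hSg, ← Finset.mul_sum]
  have quad : ∀ u v : Fin n → ℝ,
      (∑ a, ∑ b, u a * v b * Sg a b)
        = ∫ ω, ∑ i, (∑ a, X ω i a * u a) * (∑ b, X ω i b * v b) ∂μ := by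
    intro u v
    rw [master, rearr]
  -- invariance of the second moment matrix
  have key : ∀ U : Matrix (Fin n) (Fin n) ℝ, Uᵀ * U = 1 → U * B = B →
      Uᵀ * Sg * U = Sg := by
    intro U hU hUB
    have hmeas2 : Measurable fun ω => (fun i => Matrix.vecMul (X ω i) U) := by
      refine measurable_pi_lambda _ fun i => measurable_pi_lambda _ fun k => ?_
      simp only [Matrix.vecMul, dotProduct]
      exact Finset.measurable_sum _ fun a _ => (hXm i a).mul_const _
    have gmeas : ∀ k l : Fin n,
        Measurable fun (Y : Fin m → Fin n → ℝ) => ∑ i, Y i k * Y i l := by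
      intro k l
      exact Finset.measurable_sum _ fun i _ =>
        (((measurable_pi_apply k).comp (measurable_pi_apply i) :
            Measurable fun Y : Fin m → Fin n → ℝ => Y i k).mul
          ((measurable_pi_apply l).comp (measurable_pi_apply i) :
            Measurable fun Y : Fin m → Fin n → ℝ => Y i l))
    have hmapint : ∀ k l : Fin n,
        ∫ ω, ∑ i, Matrix.vecMul (X ω i) U k * Matrix.vecMul (X ω i) U l ∂μ
          = ∫ ω, ∑ i, X ω i k * X ω i l ∂μ := by
      intro k l
      have h1 := integral_map (μ := μ) hmeas2.aemeasurable
        (gmeas k l).aestronglyMeasurable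
      have h2 := integral_map (μ := μ) hX.aemeasurable
        (f := fun Y : Fin m → Fin n → ℝ => ∑ i, Y i k * Y i l)
        ((gmeas k l).aestronglyMeasurable)
      rw [← h1, hroi U hU hUB, h2]
    ext k l
    have lhs1 : (Uᵀ * Sg * U) k l = ∑ a, ∑ b, U a k * U b l * Sg a b := by
      simp only [Matrix.mul_apply, Matrix.transpose_apply, Finset.sum_mul]
      rw [Finset.sum_comm]
      refine Finset.sum_congr rfl fun a _ => ?_
      refine Finset.sum_congr rfl fun b _ => ?_
      ring
    have lhs2 : (∑ a, ∑ b, U a k * U b l * Sg a b)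
        = ∫ ω, ∑ i, Matrix.vecMul (X ω i) U k * Matrix.vecMul (X ω i) U l ∂μ := by
      rw [quad (fun a => U a k) (fun b => U b l)]
      refine integral_congr_ae (Filter.Eventually.of_forall fun ω => ?_)
      refine Finset.sum_congr rfl fun i _ => ?_
      simp [Matrix.vecMul, dotProduct]
    rw [lhs1, lhs2, hmapint k l]
    rfl
  -- positive semidefiniteness
  have hpsd : ∀ v : Fin n → ℝ, 0 ≤ v ⬝ᵥ Sg.mulVec v := by
    intro v
    have h1 : v ⬝ᵥ Sg.mulVec v = ∑ a, ∑ b, v a * v b * Sg a b := by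
      simp only [dotProduct, Matrix.mulVec, Finset.mul_sum]
      refine Finset.sum_congr rfl fun a _ => ?_
      refine Finset.sum_congr rfl fun b _ => ?_
      ring
    rw [h1, quad v v]
    refine integral_nonneg fun ω => ?_
    exact Finset.sum_nonneg fun i _ => mul_self_nonneg _
  -- columns of B are fixed by P
  have colmem : ∀ j : Fin qs, B.mulVecLin (Pi.single j 1) = fun a => B a j := by
    intro j
    funext a
    simp [Matrix.mulVecLin_apply, Matrix.mulVec, dotProduct, Pi.single_apply,
      mul_ite, mul_one, mul_zero, Finset.sum_ite_eq']
  have hPB : P * B = B := by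
    ext k j
    have hmem : (fun a => B a j) ∈ LinearMap.range B.mulVecLin :=
      ⟨Pi.single j 1, colmem j⟩
    have := congrFun (hPfix _ hmem) k
    simpa [Matrix.mul_apply, Matrix.mulVec, dotProduct] using this
  ----------------------------------------------------------------
  -- Part 1 : P Σ (1-P) = 0 via the reflection U₀ = 2P - 1
  ----------------------------------------------------------------
  have hU₀t : (P + P - 1)ᵀ = P + P - 1 := by
    rw [Matrix.transpose_sub, Matrix.transpose_add, Matrix.transpose_one, hPt]
  have hU₀U : (P + P - 1)ᵀ * (P + P - 1) = 1 := by
    rw [hU₀t]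
    have hx : (P + P - 1) * (P + P - 1)
        = (P * P + P * P + P * P + P * P) - (P + P + P + P) + 1 := by noncomm_ring
    rw [hx, hPP]
    abel
  have hU₀B : (P + P - 1) * B = B := by
    rw [Matrix.sub_mul, Matrix.add_mul, hPB, Matrix.one_mul]
    abel
  have hkey₀ := key (P + P - 1) hU₀U hU₀B
  rw [hU₀t] at hkey₀
  have e1 : P * ((P + P - 1) * Sg * (P + P - 1))
      = (P * Sg * P + P * Sg * P) - P * Sg := by
    have hPu : P * (P + P - 1) = P := by
      rw [mul_sub, mul_add, hPP, mul_one]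
      abel
    calc P * ((P + P - 1) * Sg * (P + P - 1))
        = (P * (P + P - 1)) * Sg * (P + P - 1) := by noncomm_ring
      _ = P * Sg * (P + P - 1) := by rw [hPu]
      _ = (P * Sg * P + P * Sg * P) - P * Sg := by noncomm_ring
  have e2 : (P * Sg * P + P * Sg * P) - P * Sg = P * Sg := by rw [← e1, hkey₀]
  have e3 : P * Sg * P + P * Sg * P = P * Sg + P * Sg := by
    calc P * Sg * P + P * Sg * P
        = ((P * Sg * P + P * Sg * P) - P * Sg) + P * Sg := by abel
      _ = P * Sg + P * Sg := by rw [e2]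
  have e4 : P * Sg * P = P * Sg := by
    have h2 : (2 : ℝ) • (P * Sg * P) = (2 : ℝ) • (P * Sg) := by
      rw [two_smul, two_smul]; exact e3
    exact smul_right_injective _ (by norm_num : (2 : ℝ) ≠ 0) h2
  have goal1 : P * Sg * (1 - P) = 0 := by
    rw [mul_sub, mul_one, e4, sub_self]
  refine ⟨goal1, ?_⟩
  ----------------------------------------------------------------
  -- Part 2 : (1-P) Σ (1-P) = c (1-P)
  ----------------------------------------------------------------
  set M : Matrix (Fin n) (Fin n) ℝ := (1 - P) * Sg * (1 - P) with hMdef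
  -- existence of a nonzero vector killed by P
  have hw₀ : ∃ w : Fin n → ℝ, w ≠ 0 ∧ P.mulVec w = 0 := by
    have hrange : LinearMap.range P.mulVecLin ≤ LinearMap.range B.mulVecLin := by
      rintro x ⟨v, rfl⟩
      simpa [Matrix.mulVecLin_apply] using hPrange v
    have hfr : Module.finrank ℝ (LinearMap.range P.mulVecLin) ≤ r := by
      have h1 : Module.finrank ℝ (LinearMap.range P.mulVecLin)
          ≤ Module.finrank ℝ (LinearMap.range B.mulVecLin) :=
        Submodule.finrank_mono hrange
      have h2 : Module.finrank ℝ (LinearMap.range B.mulVecLin) = r := hrank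
      omega
    have hker : LinearMap.ker P.mulVecLin ≠ ⊥ := by
      intro hbot
      have h3 := LinearMap.finrank_range_add_finrank_ker P.mulVecLin
      rw [hbot, finrank_bot] at h3
      simp only [Module.finrank_fintype_fun_eq_card, Fintype.card_fin, add_zero] at h3
      omega
    obtain ⟨w, hw, hwne⟩ := (Submodule.ne_bot_iff _).mp hker
    exact ⟨w, hwne, hw⟩
  obtain ⟨w₀, hw₀ne, hw₀P⟩ := hw₀
  -- vectors orthogonal to Col(B) annihilate B
  have hwB : ∀ w : Fin n → ℝ, P.mulVec w = 0 → ∀ j, (∑ a, w a * B a j) = 0 := by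
    intro w hw j
    have hmem : (fun a => B a j) ∈ LinearMap.range B.mulVecLin :=
      ⟨Pi.single j 1, colmem j⟩
    have hfix := hPfix _ hmem
    have hvm : Matrix.vecMul w P = P.mulVec w := by
      rw [← Matrix.vecMul_transpose, hPt]
    calc (∑ a, w a * B a j) = w ⬝ᵥ (fun a => B a j) := rfl
      _ = w ⬝ᵥ P.mulVec (fun a => B a j) := by rw [hfix]
      _ = Matrix.vecMul w P ⬝ᵥ (fun a => B a j) := dotProduct_mulVec _ _ _
      _ = (0 : Fin n → ℝ) ⬝ᵥ (fun a => B a j) := by rw [hvm, hw]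
      _ = 0 := zero_dotProduct _
  -- eigenvector property on the kernel of P
  have hMeig : ∀ w : Fin n → ℝ, P.mulVec w = 0 → ∃ t : ℝ, M.mulVec w = t • w := by
    intro w hw
    by_cases hwz : w = 0
    · exact ⟨0, by simp [hwz]⟩
    have hd : (0 : ℝ) < w ⬝ᵥ w := by
      have hnn : (0 : ℝ) ≤ w ⬝ᵥ w := by
        rw [dotProduct]
        exact Finset.sum_nonneg fun i _ => mul_self_nonneg _
      rcases lt_or_eq_of_le hnn with h | h
      · exact h
      · exact absurd (dotProduct_self_eq_zero.mp h.symm) hwz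
    set d : ℝ := w ⬝ᵥ w with hddef
    set A : Matrix (Fin n) (Fin n) ℝ := d⁻¹ • Matrix.vecMulVec w w with hAdef
    have hvvmul : ∀ v : Fin n → ℝ, (Matrix.vecMulVec w w).mulVec v = (w ⬝ᵥ v) • w := by
      intro v
      funext i
      simp only [Matrix.mulVec, dotProduct, Matrix.vecMulVec_apply, Pi.smul_apply,
        smul_eq_mul]
      rw [Finset.sum_mul]
      refine Finset.sum_congr rfl fun j _ => ?_
      ring
    have hAmul : ∀ v : Fin n → ℝ, A.mulVec v = (d⁻¹ * (w ⬝ᵥ v)) • w := by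
      intro v
      rw [hAdef, Matrix.smul_mulVec, hvvmul, smul_smul]
    have hAw : A.mulVec w = w := by
      rw [hAmul, ← hddef, inv_mul_cancel₀ hd.ne', one_smul]
    have hAt : Aᵀ = A := by
      rw [hAdef, Matrix.transpose_smul]
      congr 1
      ext i j
      simp [Matrix.vecMulVec_apply, mul_comm]
    have hAA : A * A = A := by
      have hvv : Matrix.vecMulVec w w * Matrix.vecMulVec w w
          = d • Matrix.vecMulVec w w := by
        ext i j
        simp only [Matrix.mul_apply, Matrix.vecMulVec_apply, Matrix.smul_apply,
          smul_eq_mul, hddef, dotProduct]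
        rw [Finset.sum_mul]
        refine Finset.sum_congr rfl fun a _ => ?_
        ring
      rw [hAdef, Matrix.smul_mul, Matrix.mul_smul, hvv, smul_smul, smul_smul]
      congr 1
      field_simp
    have hAB : A * B = 0 := by
      rw [hAdef, Matrix.smul_mul]
      have : Matrix.vecMulVec w w * B = 0 := by
        ext i j
        simp only [Matrix.mul_apply, Matrix.vecMulVec_apply, Matrix.zero_apply]
        calc (∑ a, w i * w a * B a j) = w i * ∑ a, w a * B a j := by
              rw [Finset.mul_sum]
              exact Finset.sum_congr rfl fun a _ => by ring
          _ = 0 := by rw [hwB w hw j, mul_zero]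
      rw [this, smul_zero]
    -- the reflection 1 - 2A
    have hUt : (1 - (A + A))ᵀ = 1 - (A + A) := by
      rw [Matrix.transpose_sub, Matrix.transpose_add, Matrix.transpose_one, hAt]
    have hUU : (1 - (A + A))ᵀ * (1 - (A + A)) = 1 := by
      rw [hUt]
      have hx : (1 - (A + A)) * (1 - (A + A))
          = 1 - (A + A) - (A + A) + (A * A + A * A + A * A + A * A) := by noncomm_ring
      rw [hx, hAA]
      abel
    have hUB : (1 - (A + A)) * B = B := by
      rw [Matrix.sub_mul, Matrix.add_mul, hAB, Matrix.one_mul, add_zero, sub_zero]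
    have hkeyA := key (1 - (A + A)) hUU hUB
    rw [hUt] at hkeyA
    -- extract A Σ + Σ A = A Σ A + A Σ A
    have hexp : (1 - (A + A)) * Sg * (1 - (A + A))
        = Sg - (A * Sg + Sg * A) - (A * Sg + Sg * A)
          + ((A * Sg * A + A * Sg * A) + (A * Sg * A + A * Sg * A)) := by noncomm_ring
    rw [hexp] at hkeyA
    have h4 : ((A * Sg * A + A * Sg * A) + (A * Sg * A + A * Sg * A))
        - ((A * Sg + Sg * A) + (A * Sg + Sg * A)) = 0 := by
      have h2 := sub_eq_zero.mpr hkeyA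
      rw [← h2]
      abel
    have h5 : (A * Sg * A + A * Sg * A) + (A * Sg * A + A * Sg * A)
        = (A * Sg + Sg * A) + (A * Sg + Sg * A) := sub_eq_zero.mp h4
    have h6 : A * Sg * A + A * Sg * A = A * Sg + Sg * A := by
      have hsm : (2 : ℝ) • (A * Sg * A + A * Sg * A) = (2 : ℝ) • (A * Sg + Sg * A) := by
        rw [two_smul, two_smul]; exact h5
      exact smul_right_injective _ (by norm_num : (2 : ℝ) ≠ 0) hsm
    -- apply to w
    have hv := congrArg (fun N => Matrix.mulVec N w) h6
    simp only [Matrix.add_mulVec, ← Matrix.mulVec_mulVec] at hv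
    rw [hAw] at hv
    -- hv : A (Σ w) + A (Σ w) = A (Σ w) + Σ w   (after hAw substitutions)
    have hs : Sg.mulVec w = A.mulVec (Sg.mulVec w) := (add_right_injective _ hv).symm
    have hSgw : Sg.mulVec w = (d⁻¹ * (w ⬝ᵥ Sg.mulVec w)) • w := by
      conv_lhs => rw [hs, hAmul]
    -- transfer to M
    have h1P : (1 - P).mulVec w = w := by
      rw [Matrix.sub_mulVec, Matrix.one_mulVec, hw, sub_zero]
    refine ⟨d⁻¹ * (w ⬝ᵥ Sg.mulVec w), ?_⟩
    calc M.mulVec w = (1 - P).mulVec (Sg.mulVec ((1 - P).mulVec w)) := by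
          rw [hMdef, ← Matrix.mulVec_mulVec, ← Matrix.mulVec_mulVec]
      _ = (1 - P).mulVec (Sg.mulVec w) := by rw [h1P]
      _ = (1 - P).mulVec ((d⁻¹ * (w ⬝ᵥ Sg.mulVec w)) • w) := by rw [← hSgw]
      _ = (d⁻¹ * (w ⬝ᵥ Sg.mulVec w)) • (1 - P).mulVec w := Matrix.mulVec_smul _ _ _
      _ = (d⁻¹ * (w ⬝ᵥ Sg.mulVec w)) • w := by rw [h1P]
  obtain ⟨c₀, hc₀⟩ := hMeig w₀ hw₀P
  -- the eigenvalue is the same for all vectors in the kernel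
  have hconst : ∀ w : Fin n → ℝ, P.mulVec w = 0 → M.mulVec w = c₀ • w := by
    intro w hw
    obtain ⟨t, ht⟩ := hMeig w hw
    by_cases hwz : w = 0
    · simp [hwz]
    obtain ⟨s, hs⟩ := hMeig (w + w₀) (by rw [Matrix.mulVec_add, hw, hw₀P, add_zero])
    rw [Matrix.mulVec_add, ht, hc₀, smul_add] at hs
    -- hs : t • w + c₀ • w₀ = s • w + s • w₀
    by_cases hts : t = s
    · subst hts
      have h7 : c₀ • w₀ = t • w₀ := add_left_cancel hs
      have h8 : (c₀ - t) • w₀ = 0 := by rw [sub_smul, h7, sub_self]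
      rcases smul_eq_zero.mp h8 with h | h
      · have : c₀ = t := by linarith [sub_eq_zero.mp (by linarith [h] : c₀ - t = 0)]
        rw [ht, this]
      · exact absurd h hw₀ne
    · have h6 : t • w - s • w = s • w₀ - c₀ • w₀ := by
        calc t • w - s • w = (t • w + c₀ • w₀) - (s • w + c₀ • w₀) := by abel
          _ = (s • w + s • w₀) - (s • w + c₀ • w₀) := by rw [hs]
          _ = s • w₀ - c₀ • w₀ := by abel
      have hrel : (t - s) • w = (s - c₀) • w₀ := by
        rw [sub_smul, sub_smul]; exact h6
      have hw_eq : w = ((t - s)⁻¹ * (s - c₀)) • w₀ := by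
        rw [← smul_smul, ← hrel, smul_smul, inv_mul_cancel₀ (sub_ne_zero.mpr hts),
          one_smul]
      rw [hw_eq]
      have : M.mulVec (((t - s)⁻¹ * (s - c₀)) • w₀)
          = ((t - s)⁻¹ * (s - c₀)) • M.mulVec w₀ := Matrix.mulVec_smul _ _ _
      rw [this, hc₀, smul_comm]
  -- nonnegativity of c₀
  have hd₀ : (0 : ℝ) < w₀ ⬝ᵥ w₀ := by
    have hnn : (0 : ℝ) ≤ w₀ ⬝ᵥ w₀ := by
      rw [dotProduct]
      exact Finset.sum_nonneg fun i _ => mul_self_nonneg _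
    rcases lt_or_eq_of_le hnn with h | h
    · exact h
    · exact absurd (dotProduct_self_eq_zero.mp h.symm) hw₀ne
  have h1Pw₀ : (1 - P).mulVec w₀ = w₀ := by
    rw [Matrix.sub_mulVec, Matrix.one_mulVec, hw₀P, sub_zero]
  have hc₀nn : 0 ≤ c₀ := by
    have h9 : w₀ ⬝ᵥ M.mulVec w₀ = w₀ ⬝ᵥ Sg.mulVec w₀ := by
      have hM1 : M.mulVec w₀ = (1 - P).mulVec (Sg.mulVec w₀) := by
        rw [hMdef, ← Matrix.mulVec_mulVec, ← Matrix.mulVec_mulVec, h1Pw₀]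
      rw [hM1, dotProduct_mulVec]
      have hvm : Matrix.vecMul w₀ (1 - P) = w₀ := by
        have ht1 : (1 - P)ᵀ = 1 - P := by
          rw [Matrix.transpose_sub, Matrix.transpose_one, hPt]
        rw [← ht1, Matrix.vecMul_transpose, h1Pw₀]
      rw [hvm]
    have h10 : w₀ ⬝ᵥ M.mulVec w₀ = c₀ * (w₀ ⬝ᵥ w₀) := by
      rw [hc₀, dotProduct_smul, smul_eq_mul]
    have h11 : 0 ≤ c₀ * (w₀ ⬝ᵥ w₀) := by
      rw [← h10, h9]; exact hpsd w₀
    nlinarith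
  -- conclude M = c₀ • (1 - P)
  refine ⟨c₀, hc₀nn, ?_⟩
  have hP1P : P * (1 - P) = 0 := by rw [mul_sub, mul_one, hPP, sub_self]
  have h1P1P : (1 - P) * (1 - P) = 1 - P := by
    have : (1 - P) * (1 - P) = 1 - P - P + P * P := by noncomm_ring
    rw [this, hPP]
    abel
  have hfin : ∀ v : Fin n → ℝ, M.mulVec v = (c₀ • (1 - P)).mulVec v := by
    intro v
    have hwv : P.mulVec ((1 - P).mulVec v) = 0 := by
      rw [Matrix.mulVec_mulVec, hP1P, Matrix.zero_mulVec]
    have h7 := hconst _ hwv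
    have hM1P : M * (1 - P) = M := by
      rw [hMdef, Matrix.mul_assoc ((1 - P) * Sg) (1 - P) (1 - P), h1P1P]
    have h8 : M.mulVec v = M.mulVec ((1 - P).mulVec v) := by
      rw [Matrix.mulVec_mulVec, hM1P]
    rw [h8, h7, Matrix.smul_mulVec]
  exact mulVec_ext_aux hfin
end

section
/- Let x be a random vector in ℝⁿ, let ε be a real random variable independent of x, let B ∈ ℝ^{n×q*}, let g : ℝ^{q*} × ℝ → ℝ be measurable, and set y = g(Bᵀx, ε). Fix j ∈ [n] and suppose the j-th row of B is the zero vector, i.e., b_j = 0 ∈ ℝ^{q*}. Then y is conditionally independent of the coordinate x_j given the remaining coordinates x_{−j} = (x_k)_{k≠j}. -/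
open MeasureTheory ProbabilityTheory Matrix

/-- (⇐) direction of Theorem B.1: in the multi-index model
`y = g(Bᵀx, ε)` with `ε` independent of `x`, if the `j`-th row of `B` is zero then `y` is
conditionally independent of `x_j` given the remaining coordinates `x_{−j}`, i.e. given the
σ-algebra generated by `ω ↦ (x_k(ω))_{k ≠ j}`. -/
theorem stmt19 {n q : ℕ} {Ω : Type*} [MeasurableSpace Ω] [StandardBorelSpace Ω]
    (μ : Measure Ω) [IsProbabilityMeasure μ]
    (x : Ω → Fin n → ℝ) (hx : Measurable x)
    (ε : Ω → ℝ) (hε : Measurable ε)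
    (hindep : IndepFun ε x μ)
    (B : Matrix (Fin n) (Fin q) ℝ)
    (g : (Fin q → ℝ) → ℝ → ℝ) (hg : Measurable fun p : (Fin q → ℝ) × ℝ => g p.1 p.2)
    (y : Ω → ℝ) (hy : ∀ ω, y ω = g (Bᵀ.mulVec (x ω)) (ε ω))
    (j : Fin n) (hj : ∀ k, B j k = 0)
    (hle : MeasurableSpace.comap (fun ω (k : {k : Fin n // k ≠ j}) => x ω k.1)
        MeasurableSpace.pi ≤ ‹MeasurableSpace Ω›) :
    CondIndepFun
      (MeasurableSpace.comap (fun ω (k : {k : Fin n // k ≠ j}) => x ω k.1) MeasurableSpace.pi)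
      hle y (fun ω => x ω j) μ := by
  classical
  -- basic measurability facts
  have hvB : Measurable fun u : Fin n → ℝ => Bᵀ.mulVec u := by
    apply measurable_pi_lambda
    intro k
    simp only [Matrix.mulVec, dotProduct]
    exact Finset.measurable_sum _ fun i _ => (measurable_pi_apply i).const_mul _
  have hy_eq : y = fun ω => g (Bᵀ.mulVec (x ω)) (ε ω) := funext hy
  have hy_meas : Measurable y := by
    rw [hy_eq]; exact hg.comp ((hvB.comp hx).prodMk hε)
  have hxj_meas : Measurable fun ω => x ω j := (measurable_pi_apply j).comp hx
  -- σ-algebras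
  have hmX : MeasurableSpace.comap x MeasurableSpace.pi ≤ _ := hx.comap_le
  haveI hPν : IsProbabilityMeasure (μ.map ε) := Measure.isProbabilityMeasure_map hε.aemeasurable
  haveI hPκ : IsProbabilityMeasure (μ.map x) := Measure.isProbabilityMeasure_map hx.aemeasurable
  have hproj : Measurable fun u : Fin n → ℝ => (fun k : {k : Fin n // k ≠ j} => u k.1) :=
    measurable_pi_lambda _ fun k => measurable_pi_apply k.1
  have HMPX : (MeasurableSpace.comap (fun ω (k : {k : Fin n // k ≠ j}) => x ω k.1) MeasurableSpace.pi) ≤ (MeasurableSpace.comap x MeasurableSpace.pi) := by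
    have h1 : (fun ω (k : {k : Fin n // k ≠ j}) => x ω k.1)
        = (fun u (k : {k : Fin n // k ≠ j}) => u k.1) ∘ x := rfl
    rw [h1, ← MeasurableSpace.comap_comp]
    exact MeasurableSpace.comap_mono hproj.comap_le
  have hxmX : Measurable[(MeasurableSpace.comap x MeasurableSpace.pi)] x := Measurable.of_comap_le le_rfl
  -- the index depends only on the coordinates away from j
  have hmul : ∀ u : Fin n → ℝ,
      Bᵀ.mulVec u = fun k => ∑ i : {i : Fin n // i ≠ j}, B i.1 k * u i.1 := by
    intro u
    funext k
    simp only [Matrix.mulVec, dotProduct, Matrix.transpose_apply]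
    rw [← Finset.sum_erase_add _ _ (Finset.mem_univ j), hj k, zero_mul, add_zero]
    exact Finset.sum_subtype _ (fun i => by simp [Finset.mem_erase]) _
  -- apply the characterization
  rw [condIndepFun_iff_condExp_inter_preimage_eq_mul hy_meas hxj_meas]
  intro s t hs ht
  -- the basic indicator
  set h0 : (Fin q → ℝ) × ℝ → ℝ :=
    Set.indicator {p : (Fin q → ℝ) × ℝ | g p.1 p.2 ∈ s} (fun _ => (1 : ℝ)) with hh0_def
  have hh0_meas : Measurable h0 := measurable_const.indicator (hg hs)
  have hh0_bd : ∀ p, ‖h0 p‖ ≤ 1 := by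
    intro p
    rw [hh0_def]
    by_cases hp : p ∈ {p : (Fin q → ℝ) × ℝ | g p.1 p.2 ∈ s} <;>
      simp [Set.indicator_apply, hp]
  -- the "frozen" conditional probability
  set φ : (Fin n → ℝ) → ℝ := fun u => ∫ e, h0 (Bᵀ.mulVec u, e) ∂(μ.map ε) with HPH_def
  have HPH_sm : StronglyMeasurable φ := by
    have : StronglyMeasurable fun p : (Fin n → ℝ) × ℝ => h0 (Bᵀ.mulVec p.1, p.2) :=
      (hh0_meas.comp ((hvB.comp measurable_fst).prodMk measurable_snd)).stronglyMeasurable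
    exact this.integral_prod_right'
  have HPH_bd : ∀ u, ‖φ u‖ ≤ 1 := by
    intro u
    calc ‖φ u‖ ≤ 1 * ((μ.map ε) Set.univ).toReal :=
          norm_integral_le_of_norm_le_const (Filter.Eventually.of_forall fun e => hh0_bd _)
      _ = 1 := by simp
  -- φ ∘ x is m'-measurable
  have HPHSM : StronglyMeasurable[(MeasurableSpace.comap (fun ω (k : {k : Fin n // k ≠ j}) => x ω k.1) MeasurableSpace.pi)] fun ω => φ (x ω) := by
    set ψ : ({k : Fin n // k ≠ j} → ℝ) → ℝ :=
      fun w => ∫ e, h0 (fun k => ∑ i : {i : Fin n // i ≠ j}, B i.1 k * w i, e) ∂(μ.map ε) with HPSI_def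
    have HPSI_sm : StronglyMeasurable ψ := by
      have hv' : Measurable fun w : {k : Fin n // k ≠ j} → ℝ =>
          (fun k => ∑ i : {i : Fin n // i ≠ j}, B i.1 k * w i : Fin q → ℝ) :=
        measurable_pi_lambda _ fun k =>
          Finset.measurable_sum _ fun i _ => (measurable_pi_apply i).const_mul _
      have : StronglyMeasurable fun p : ({k : Fin n // k ≠ j} → ℝ) × ℝ =>
          h0 ((fun k => ∑ i : {i : Fin n // i ≠ j}, B i.1 k * p.1 i : Fin q → ℝ), p.2) :=
        (hh0_meas.comp ((hv'.comp measurable_fst).prodMk measurable_snd)).stronglyMeasurable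
      exact this.integral_prod_right'
    have hcomp : (fun ω => φ (x ω))
        = ψ ∘ (fun ω (k : {k : Fin n // k ≠ j}) => x ω k.1) := by
      funext ω
      simp only [Function.comp, HPH_def, HPSI_def]
      rw [hmul (x ω)]
    rw [hcomp]
    exact HPSI_sm.comp_measurable (Measurable.of_comap_le le_rfl)
  have HPHx_smX : StronglyMeasurable[(MeasurableSpace.comap x MeasurableSpace.pi)] fun ω => φ (x ω) :=
    HPH_sm.comp_measurable hxmX
  have HPHx_int : Integrable (fun ω => φ (x ω)) μ :=
    (integrable_const (1 : ℝ)).mono'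
      ((HPH_sm.measurable.comp hx).aestronglyMeasurable)
      (Filter.Eventually.of_forall fun ω => HPH_bd _)
  -- indicator of y ⁻¹' s rewritten through h0
  have hy_ind : ∀ ω, Set.indicator (y ⁻¹' s) (fun _ => (1 : ℝ)) ω
      = h0 (Bᵀ.mulVec (x ω), ε ω) := by
    intro ω
    simp only [hh0_def, Set.indicator_apply, Set.mem_preimage, Set.mem_setOf_eq, hy ω]
  have hys_int : Integrable (Set.indicator (y ⁻¹' s) fun _ => (1 : ℝ)) μ :=
    (integrable_const (1 : ℝ)).indicator (hy_meas hs)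
  -- the freezing identity
  have key : (fun ω => φ (x ω)) =ᵐ[μ] μ⟦y ⁻¹' s | (MeasurableSpace.comap x MeasurableSpace.pi)⟧ := by
    refine ae_eq_condExp_of_forall_setIntegral_eq hmX hys_int
      (fun A _ _ => HPHx_int.integrableOn) ?_ HPHx_smX.aestronglyMeasurable
    rintro A ⟨E, hE, rfl⟩ -
    -- LHS: ∫_{x⁻¹ E} φ ∘ x = ∫_E φ dκ
    have hL : ∫ ω in x ⁻¹' E, φ (x ω) ∂μ = ∫ u in E, φ u ∂(μ.map x) :=
      (setIntegral_map hE HPH_sm.aestronglyMeasurable hx.aemeasurable).symm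
    -- RHS computation via the product measure
    set H : (Fin n → ℝ) × ℝ → ℝ :=
      fun p => Set.indicator E (fun _ => (1 : ℝ)) p.1 * h0 (Bᵀ.mulVec p.1, p.2) with hH_def
    have hH_meas : Measurable H :=
      (measurable_const.indicator hE).comp measurable_fst |>.mul
        (hh0_meas.comp ((hvB.comp measurable_fst).prodMk measurable_snd))
    have hH_bd : ∀ p, ‖H p‖ ≤ 1 := by
      intro p
      rw [hH_def, norm_mul]
      by_cases hp : p.1 ∈ E
      · simp only [Set.indicator_of_mem hp]
        simpa using hh0_bd (Bᵀ.mulVec p.1, p.2)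
      · simp [Set.indicator_of_notMem hp]
    have hmap : μ.map (fun ω => (x ω, ε ω)) = (μ.map x).prod (μ.map ε) :=
      (indepFun_iff_map_prod_eq_prod_map_map hx.aemeasurable hε.aemeasurable).mp hindep.symm
    have hH_int : Integrable H ((μ.map x).prod (μ.map ε)) :=
      (integrable_const (1 : ℝ)).mono' hH_meas.aestronglyMeasurable
        (Filter.Eventually.of_forall fun p => hH_bd p)
    have hR1 : ∫ ω in x ⁻¹' E, Set.indicator (y ⁻¹' s) (fun _ => (1 : ℝ)) ω ∂μ
        = ∫ ω, H (x ω, ε ω) ∂μ := by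
      rw [← integral_indicator (hx hE)]
      congr 1
      funext ω
      rw [hH_def]
      by_cases hω : x ω ∈ E
      · simp [Set.indicator_of_mem, hω, hy_ind ω]
      · simp [Set.indicator_of_notMem, hω]
    have hR2 : ∫ ω, H (x ω, ε ω) ∂μ = ∫ p, H p ∂((μ.map x).prod (μ.map ε)) := by
      rw [← hmap, integral_map (hx.prodMk hε).aemeasurable hH_meas.aestronglyMeasurable]
    have hR3 : ∫ p, H p ∂((μ.map x).prod (μ.map ε)) = ∫ u in E, φ u ∂(μ.map x) := by
      rw [integral_prod _ hH_int]
      rw [← integral_indicator hE]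
      congr 1
      funext u
      rw [hH_def]
      by_cases hu : u ∈ E
      · simp only [Set.indicator_of_mem hu, one_mul, HPH_def]
      · simp [Set.indicator_of_notMem hu]
    rw [hL, hR1, hR2, hR3]
  -- the preimage of t under x_j is (MeasurableSpace.comap x MeasurableSpace.pi)-measurable
  have hBmX : MeasurableSet[(MeasurableSpace.comap x MeasurableSpace.pi)] ((fun ω => x ω j) ⁻¹' t) :=
    ⟨(fun u : Fin n → ℝ => u j) ⁻¹' t, measurable_pi_apply j ht, rfl⟩
  have hBind_int : Integrable (Set.indicator ((fun ω => x ω j) ⁻¹' t) fun _ => (1 : ℝ)) μ :=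
    (integrable_const (1 : ℝ)).indicator (hxj_meas ht)
  -- tower for y ⁻¹' s given m'
  have hys_cond : μ⟦y ⁻¹' s | (MeasurableSpace.comap (fun ω (k : {k : Fin n // k ≠ j}) => x ω k.1) MeasurableSpace.pi)⟧ =ᵐ[μ] fun ω => φ (x ω) := by
    calc μ⟦y ⁻¹' s | (MeasurableSpace.comap (fun ω (k : {k : Fin n // k ≠ j}) => x ω k.1) MeasurableSpace.pi)⟧
        =ᵐ[μ] μ[μ⟦y ⁻¹' s | (MeasurableSpace.comap x MeasurableSpace.pi)⟧ | (MeasurableSpace.comap (fun ω (k : {k : Fin n // k ≠ j}) => x ω k.1) MeasurableSpace.pi)] := (condExp_condExp_of_le HMPX hmX).symm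
      _ =ᵐ[μ] μ[(fun ω => φ (x ω)) | (MeasurableSpace.comap (fun ω (k : {k : Fin n // k ≠ j}) => x ω k.1) MeasurableSpace.pi)] := condExp_congr_ae key.symm
      _ = fun ω => φ (x ω) := condExp_of_stronglyMeasurable hle HPHSM HPHx_int
  -- inner conditional expectation of the intersection
  have hinter : Set.indicator (y ⁻¹' s ∩ (fun ω => x ω j) ⁻¹' t) (fun _ => (1 : ℝ))
      = Set.indicator ((fun ω => x ω j) ⁻¹' t)
          (Set.indicator (y ⁻¹' s) fun _ => (1 : ℝ)) := by
    funext ω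
    by_cases h1 : ω ∈ (fun ω => x ω j) ⁻¹' t
    · by_cases h2 : ω ∈ y ⁻¹' s <;>
        simp [Set.indicator_apply, h1, h2]
    · simp [Set.indicator_apply, h1]
  have hstep2 : μ⟦y ⁻¹' s ∩ (fun ω => x ω j) ⁻¹' t | (MeasurableSpace.comap x MeasurableSpace.pi)⟧
      =ᵐ[μ] Set.indicator ((fun ω => x ω j) ⁻¹' t) (fun ω => φ (x ω)) := by
    calc μ⟦y ⁻¹' s ∩ (fun ω => x ω j) ⁻¹' t | (MeasurableSpace.comap x MeasurableSpace.pi)⟧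
        = μ[Set.indicator ((fun ω => x ω j) ⁻¹' t)
            (Set.indicator (y ⁻¹' s) fun _ => (1 : ℝ)) | (MeasurableSpace.comap x MeasurableSpace.pi)] := by rw [hinter]
      _ =ᵐ[μ] Set.indicator ((fun ω => x ω j) ⁻¹' t) (μ⟦y ⁻¹' s | (MeasurableSpace.comap x MeasurableSpace.pi)⟧) :=
          condExp_indicator hys_int hBmX
      _ =ᵐ[μ] Set.indicator ((fun ω => x ω j) ⁻¹' t) (fun ω => φ (x ω)) := by
          filter_upwards [key] with ω hω
          by_cases h1 : ω ∈ (fun ω => x ω j) ⁻¹' t <;>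
            simp [Set.indicator_apply, h1, hω]
  -- rewrite the indicator as a product and pull out the m'-measurable factor
  have hprod : Set.indicator ((fun ω => x ω j) ⁻¹' t) (fun ω => φ (x ω))
      = (fun ω => φ (x ω)) * Set.indicator ((fun ω => x ω j) ⁻¹' t) (fun _ => (1 : ℝ)) := by
    funext ω
    by_cases h1 : ω ∈ (fun ω => x ω j) ⁻¹' t <;>
      simp [Set.indicator_apply, h1]
  have hmul_int : Integrable ((fun ω => φ (x ω)) *
      Set.indicator ((fun ω => x ω j) ⁻¹' t) fun _ => (1 : ℝ)) μ := by
    refine (integrable_const (1 : ℝ)).mono'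
      ((HPH_sm.measurable.comp hx).aestronglyMeasurable.mul
        ((measurable_const.indicator (hxj_meas ht)).aestronglyMeasurable))
      (Filter.Eventually.of_forall fun ω => ?_)
    simp only [Pi.mul_apply, norm_mul]
    by_cases h1 : ω ∈ (fun ω => x ω j) ⁻¹' t
    · simp only [Set.indicator_of_mem h1]
      simpa using HPH_bd (x ω)
    · simp [Set.indicator_of_notMem h1]
  have hpull : μ[(fun ω => φ (x ω)) *
        Set.indicator ((fun ω => x ω j) ⁻¹' t) (fun _ => (1 : ℝ)) | (MeasurableSpace.comap (fun ω (k : {k : Fin n // k ≠ j}) => x ω k.1) MeasurableSpace.pi)]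
      =ᵐ[μ] (fun ω => φ (x ω)) * μ⟦(fun ω => x ω j) ⁻¹' t | (MeasurableSpace.comap (fun ω (k : {k : Fin n // k ≠ j}) => x ω k.1) MeasurableSpace.pi)⟧ :=
    condExp_mul_of_stronglyMeasurable_left HPHSM hmul_int hBind_int
  -- assemble
  have hmain : μ⟦y ⁻¹' s ∩ (fun ω => x ω j) ⁻¹' t | (MeasurableSpace.comap (fun ω (k : {k : Fin n // k ≠ j}) => x ω k.1) MeasurableSpace.pi)⟧
      =ᵐ[μ] (fun ω => φ (x ω)) * μ⟦(fun ω => x ω j) ⁻¹' t | (MeasurableSpace.comap (fun ω (k : {k : Fin n // k ≠ j}) => x ω k.1) MeasurableSpace.pi)⟧ := by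
    calc μ⟦y ⁻¹' s ∩ (fun ω => x ω j) ⁻¹' t | (MeasurableSpace.comap (fun ω (k : {k : Fin n // k ≠ j}) => x ω k.1) MeasurableSpace.pi)⟧
        =ᵐ[μ] μ[μ⟦y ⁻¹' s ∩ (fun ω => x ω j) ⁻¹' t | (MeasurableSpace.comap x MeasurableSpace.pi)⟧ | (MeasurableSpace.comap (fun ω (k : {k : Fin n // k ≠ j}) => x ω k.1) MeasurableSpace.pi)] :=
          (condExp_condExp_of_le HMPX hmX).symm
      _ =ᵐ[μ] μ[Set.indicator ((fun ω => x ω j) ⁻¹' t) (fun ω => φ (x ω)) | (MeasurableSpace.comap (fun ω (k : {k : Fin n // k ≠ j}) => x ω k.1) MeasurableSpace.pi)] :=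
          condExp_congr_ae hstep2
      _ = μ[(fun ω => φ (x ω)) *
            Set.indicator ((fun ω => x ω j) ⁻¹' t) (fun _ => (1 : ℝ)) | (MeasurableSpace.comap (fun ω (k : {k : Fin n // k ≠ j}) => x ω k.1) MeasurableSpace.pi)] := by rw [hprod]
      _ =ᵐ[μ] (fun ω => φ (x ω)) * μ⟦(fun ω => x ω j) ⁻¹' t | (MeasurableSpace.comap (fun ω (k : {k : Fin n // k ≠ j}) => x ω k.1) MeasurableSpace.pi)⟧ := hpull
  filter_upwards [hmain, hys_cond] with ω h1 h2
  rw [h1, Pi.mul_apply, h2]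
end
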